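/- arXiv:2507.18555 — 4 statements merged into one kernel-verified Lean document; each statement's English description precedes it below -/
import Mathlib

section
/- Let d ≥ 1, let γ_d be the standard Gaussian measure on ℝ^d, and let k(x,y) = E_Z[relu(⟨x,Z⟩)·relu(⟨y,Z⟩)] with Z ∼ γ_d. Then for every 1 ≤ l ≤ d and every x ∈ ℝ^d, ∫ k(x,y)·y_l dγ_d(y) = x_l/4. That is, each coordinate function x ↦ x_l is an eigenfunction of the integral operator f ↦ ∫ k(·,y)f(y)dγ_d(y) with eigenvalue 1/4. -/
open MeasureTheory Real

/-- The standard Gaussian measure on `ℝ^d`. -/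
noncomputable def stdGaussian (d : ℕ) : Measure (Fin d → ℝ) :=
  Measure.pi fun _ => ProbabilityTheory.gaussianReal 0 1

/-- ReLU activation. -/
def relu (t : ℝ) : ℝ := max t 0

/-- Euclidean inner product on `ℝ^d`. -/
noncomputable def dot {d : ℕ} (x y : Fin d → ℝ) : ℝ := ∑ i, x i * y i

/-- Euclidean norm on `ℝ^d`. -/
noncomputable def vnorm {d : ℕ} (x : Fin d → ℝ) : ℝ := Real.sqrt (∑ i, x i ^ 2)

/-- The neural tangent kernel `k(x,y) = E_Z[relu(⟨x,Z⟩) relu(⟨y,Z⟩)]`. -/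
noncomputable def ntk (d : ℕ) (x y : Fin d → ℝ) : ℝ :=
  ∫ z, relu (dot x z) * relu (dot y z) ∂ stdGaussian d

/-- The `n`-th term of the series part of the NTK expansion. -/
noncomputable def ntkTerm {d : ℕ} (x y : Fin d → ℝ) (n : ℕ) : ℝ :=
  (Nat.choose (2 * n) n : ℝ) * dot x y ^ (2 * n + 2) /
    (2 ^ (2 * n) * (2 * n + 1) * (2 * n + 2) * (vnorm x * vnorm y) ^ (2 * n + 1))

namespace NTKProof

open ProbabilityTheory Filter Asymptotics Set Topology
open scoped ENNReal NNReal

/-! ### One-dimensional Gaussian facts -/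

lemma gaussianReal_eq' : gaussianReal 0 1
    = volume.withDensity (fun x => ((gaussianPDFReal 0 1 x).toNNReal : ℝ≥0∞)) := by
  rw [gaussianReal_of_var_ne_zero 0 one_ne_zero]; rfl

lemma integral_gauss_eq (f : ℝ → ℝ) :
    ∫ x, f x ∂gaussianReal 0 1 = ∫ x, gaussianPDFReal 0 1 x * f x := by
  rw [gaussianReal_eq',
    integral_withDensity_eq_integral_smul (measurable_gaussianPDFReal 0 1).real_toNNReal f]
  congr 1; funext x
  simp [NNReal.smul_def, Real.coe_toNNReal _ (gaussianPDFReal_nonneg 0 1 x)]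

lemma integrable_gauss_iff {f : ℝ → ℝ} :
    Integrable f (gaussianReal 0 1)
      ↔ Integrable (fun x => gaussianPDFReal 0 1 x * f x) volume := by
  rw [gaussianReal_eq',
    integrable_withDensity_iff_integrable_smul (measurable_gaussianPDFReal 0 1).real_toNNReal]
  constructor <;> intro h <;> [skip; skip] <;>
  · refine h.congr (Filter.Eventually.of_forall fun x => ?_)
    simp [NNReal.smul_def, Real.coe_toNNReal _ (gaussianPDFReal_nonneg 0 1 x)]

lemma pdf_eq (x : ℝ) :
    gaussianPDFReal 0 1 x = (√(2 * π))⁻¹ * rexp (-x ^ 2 / 2) := by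
  simp [gaussianPDFReal]

lemma integrable_pow_exp (n : ℕ) :
    Integrable (fun x : ℝ => x ^ n * rexp (-x ^ 2 / 2)) volume := by
  have h := integrable_rpow_mul_exp_neg_mul_sq (b := 2⁻¹) (by norm_num)
    (s := (n : ℝ)) (lt_of_lt_of_le (by norm_num) (Nat.cast_nonneg n))
  refine h.congr (Filter.Eventually.of_forall fun x => ?_)
  show x ^ (n : ℝ) * rexp (-2⁻¹ * x ^ 2) = x ^ n * rexp (-x ^ 2 / 2)
  rw [Real.rpow_natCast]
  ring_nf

lemma integrable_pow_gauss (n : ℕ) :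
    Integrable (fun x : ℝ => x ^ n) (gaussianReal 0 1) := by
  rw [integrable_gauss_iff]
  refine ((integrable_pow_exp n).const_mul ((√(2 * π))⁻¹)).congr
    (Filter.Eventually.of_forall fun x => ?_)
  show (√(2 * π))⁻¹ * (x ^ n * rexp (-x ^ 2 / 2)) = gaussianPDFReal 0 1 x * x ^ n
  rw [pdf_eq]; ring

lemma integral_exp_gauss : ∫ x : ℝ, rexp (-x ^ 2 / 2) = √(2 * π) := by
  have h := integral_gaussian 2⁻¹
  have h2 : (fun x : ℝ => rexp (-2⁻¹ * x ^ 2)) = fun x : ℝ => rexp (-x ^ 2 / 2) := by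
    funext x; ring_nf
  rw [h2] at h
  rw [h, show π / (2⁻¹ : ℝ) = 2 * π by ring]

lemma tendsto_mul_exp_atTop : Tendsto (fun x : ℝ => x * rexp (-x ^ 2 / 2)) atTop (𝓝 0) := by
  have h := rpow_mul_exp_neg_mul_sq_isLittleO_exp_neg (b := 2⁻¹) (by norm_num) 1
  have h2 : Tendsto (fun x : ℝ => rexp (-(1 / 2) * x)) atTop (𝓝 0) := by
    have h3 : Tendsto (fun x : ℝ => (1 / 2 : ℝ) * x) atTop atTop :=
      Tendsto.const_mul_atTop (by norm_num) tendsto_id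
    refine (tendsto_exp_neg_atTop_nhds_zero.comp h3).congr fun x => ?_
    show rexp (-(1 / 2 * x)) = rexp (-(1 / 2) * x)
    ring_nf
  have := h.trans_tendsto h2
  refine this.congr fun x => ?_
  show x ^ (1 : ℝ) * rexp (-2⁻¹ * x ^ 2) = x * rexp (-x ^ 2 / 2)
  rw [Real.rpow_one]; ring_nf

lemma tendsto_f_atTop : Tendsto (fun x : ℝ => -x * rexp (-x ^ 2 / 2)) atTop (𝓝 0) := by
  have := tendsto_mul_exp_atTop.neg
  rw [neg_zero] at this
  refine this.congr fun x => by ring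

lemma tendsto_f_atBot : Tendsto (fun x : ℝ => -x * rexp (-x ^ 2 / 2)) atBot (𝓝 0) := by
  have := tendsto_mul_exp_atTop.comp tendsto_neg_atBot_atTop
  refine this.congr fun x => ?_
  show -x * rexp (-(-x) ^ 2 / 2) = -x * rexp (-x ^ 2 / 2)
  rw [neg_sq]

lemma hasDerivAt_f (x : ℝ) :
    HasDerivAt (fun x : ℝ => -x * rexp (-x ^ 2 / 2))
      ((x ^ 2 - 1) * rexp (-x ^ 2 / 2)) x := by
  have h1 : HasDerivAt (fun x : ℝ => -x ^ 2 / 2) (-x) x := by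
    have h := ((hasDerivAt_pow 2 x).neg.div_const 2)
    refine h.congr_deriv (Eq.symm ?_)
    simp
    ring
  have h2 := h1.exp
  have h3 := ((hasDerivAt_id x).neg.mul h2)
  refine h3.congr_deriv (Eq.symm ?_)
  simp only [Pi.neg_apply, id_eq]
  ring

lemma integrable_sq_sub_exp :
    Integrable (fun x : ℝ => (x ^ 2 - 1) * rexp (-x ^ 2 / 2)) volume := by
  refine ((integrable_pow_exp 2).sub (integrable_pow_exp 0)).congr
    (Filter.Eventually.of_forall fun x => ?_)
  simp only [Pi.sub_apply]
  ring

lemma integral_sq_exp_gauss : ∫ x : ℝ, x ^ 2 * rexp (-x ^ 2 / 2) = √(2 * π) := by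
  have hIoi := integral_Ioi_of_hasDerivAt_of_tendsto' (a := 0)
    (fun x _ => hasDerivAt_f x) integrable_sq_sub_exp.integrableOn tendsto_f_atTop
  have hIic := integral_Iic_of_hasDerivAt_of_tendsto' (a := 0)
    (fun x _ => hasDerivAt_f x) integrable_sq_sub_exp.integrableOn tendsto_f_atBot
  have hsplit := intervalIntegral.integral_Iic_add_Ioi (b := 0) (μ := volume)
    integrable_sq_sub_exp.integrableOn integrable_sq_sub_exp.integrableOn
  have h0 : ∫ x : ℝ, (x ^ 2 - 1) * rexp (-x ^ 2 / 2) = 0 := by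
    rw [← hsplit, hIic, hIoi]; norm_num
  have hsub : ∫ x : ℝ, (x ^ 2 - 1) * rexp (-x ^ 2 / 2)
      = (∫ x : ℝ, x ^ 2 * rexp (-x ^ 2 / 2)) - ∫ x : ℝ, rexp (-x ^ 2 / 2) := by
    rw [← integral_sub (integrable_pow_exp 2) (by simpa using integrable_pow_exp 0)]
    congr 1; funext x; ring
  rw [h0, integral_exp_gauss] at hsub
  linarith

lemma integral_sq_gauss : ∫ x : ℝ, x ^ 2 ∂gaussianReal 0 1 = 1 := by
  rw [integral_gauss_eq]
  have : (fun x : ℝ => gaussianPDFReal 0 1 x * x ^ 2)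
      = fun x : ℝ => (√(2 * π))⁻¹ * (x ^ 2 * rexp (-x ^ 2 / 2)) := by
    funext x; rw [pdf_eq]; ring
  rw [this, integral_const_mul, integral_sq_exp_gauss]
  rw [inv_mul_cancel₀]
  positivity

lemma gauss_map_neg :
    Measure.map (fun x : ℝ => -x) (gaussianReal 0 1) = gaussianReal 0 1 := by
  have h := gaussianReal_map_const_mul (μ := 0) (v := 1) (-1)
  have h1 : (fun x : ℝ => (-1 : ℝ) * x) = fun x : ℝ => -x := by funext x; ring
  have h2 : (⟨(-1 : ℝ) ^ 2, sq_nonneg _⟩ : ℝ≥0) = 1 := by ext; norm_num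
  rw [h1] at h
  simpa using h

lemma integral_id_gauss : ∫ x : ℝ, x ∂gaussianReal 0 1 = 0 := by
  have h : ∫ x : ℝ, x ∂gaussianReal 0 1 = ∫ x : ℝ, -x ∂gaussianReal 0 1 := by
    conv_lhs => rw [← gauss_map_neg]
    rw [integral_map (f := fun y : ℝ => y) measurable_neg.aemeasurable
      measurable_id.aestronglyMeasurable]
  rw [integral_neg] at h
  linarith

/-! ### Multi-dimensional helpers -/

variable {d : ℕ}

instance : IsProbabilityMeasure (stdGaussian d) := by
  unfold _root_.stdGaussian; infer_instance

lemma integrable_prod_comp (f : Fin d → ℝ → ℝ)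
    (hf : ∀ i, Integrable (f i) (gaussianReal 0 1)) :
    Integrable (fun y : Fin d → ℝ => ∏ i, f i (y i)) (stdGaussian d) := by
  letI : MeasureSpace ℝ := ⟨gaussianReal 0 1⟩
  haveI : SigmaFinite (volume : Measure ℝ) :=
    inferInstanceAs (SigmaFinite (gaussianReal 0 1))
  exact MeasureTheory.Integrable.fintype_prod (𝕜 := ℝ) hf

lemma integral_prod_comp (f : Fin d → ℝ → ℝ) :
    ∫ y : Fin d → ℝ, ∏ i, f i (y i) ∂stdGaussian d
      = ∏ i, ∫ t : ℝ, f i t ∂gaussianReal 0 1 := by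
  letI : MeasureSpace ℝ := ⟨gaussianReal 0 1⟩
  haveI : SigmaFinite (volume : Measure ℝ) :=
    inferInstanceAs (SigmaFinite (gaussianReal 0 1))
  exact MeasureTheory.integral_fintype_prod_eq_prod f

lemma measurePreserving_neg :
    MeasurePreserving (fun y : Fin d → ℝ => -y) (stdGaussian d) (stdGaussian d) := by
  have h := measurePreserving_pi (fun _ : Fin d => gaussianReal 0 1)
    (fun _ : Fin d => gaussianReal 0 1) (f := fun _ t => -t)
    (fun _ => ⟨measurable_neg, gauss_map_neg⟩)
  exact h

lemma integral_odd (f : (Fin d → ℝ) → ℝ)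
    (hmeas : AEStronglyMeasurable f (stdGaussian d))
    (hodd : ∀ y, f (-y) = -f y) :
    ∫ y, f y ∂stdGaussian d = 0 := by
  have h1 : ∫ y, f y ∂stdGaussian d = ∫ y, f (-y) ∂stdGaussian d := by
    conv_lhs => rw [← measurePreserving_neg.map_eq]
    rw [integral_map measurable_neg.aemeasurable
      (by rwa [measurePreserving_neg.map_eq])]
  simp_rw [hodd] at h1
  rw [integral_neg] at h1
  linarith

lemma coord_prod_eq (i l : Fin d) (y : Fin d → ℝ) :
    y i * y l = ∏ k, ((if k = i then y k else 1) * (if k = l then y k else 1)) := by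
  rw [Finset.prod_mul_distrib, Finset.prod_ite_eq', Finset.prod_ite_eq']
  simp

lemma integrable_coord_f (i l k : Fin d) :
    Integrable (fun t : ℝ => (if k = i then t else 1) * (if k = l then t else 1))
      (gaussianReal 0 1) := by
  by_cases h1 : k = i <;> by_cases h2 : k = l
  · subst h1; subst h2
    refine (integrable_pow_gauss 2).congr (Filter.Eventually.of_forall fun t => ?_)
    simp [pow_two]
  · subst h1
    refine (integrable_pow_gauss 1).congr (Filter.Eventually.of_forall fun t => ?_)
    simp [h2]
  · subst h2
    refine (integrable_pow_gauss 1).congr (Filter.Eventually.of_forall fun t => ?_)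
    simp [h1]
  · refine (integrable_const (1:ℝ)).congr (Filter.Eventually.of_forall fun t => ?_)
    simp [h1, h2]

lemma integrable_coord_mul (i l : Fin d) :
    Integrable (fun y : Fin d → ℝ => y i * y l) (stdGaussian d) := by
  refine (integrable_prod_comp
    (fun k t => (if k = i then t else 1) * (if k = l then t else 1))
    (fun k => integrable_coord_f i l k)).congr
    (Filter.Eventually.of_forall fun y => (coord_prod_eq i l y).symm)

lemma integral_coord_mul (i l : Fin d) :
    ∫ y, y i * y l ∂stdGaussian d = if i = l then 1 else 0 := by
  have heq : ∫ y, y i * y l ∂stdGaussian d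
      = ∏ k, ∫ t : ℝ, ((if k = i then t else 1) * (if k = l then t else 1))
          ∂gaussianReal 0 1 :=
    (integral_congr_ae (Filter.Eventually.of_forall fun y => coord_prod_eq i l y)).trans
      (integral_prod_comp
        (fun k t => (if k = i then t else 1) * (if k = l then t else 1)))
  rw [heq]
  by_cases hil : i = l
  · subst hil
    rw [if_pos rfl]
    refine Finset.prod_eq_one fun k _ => ?_
    by_cases hk : k = i
    · subst hk
      refine (integral_congr_ae
        (Filter.Eventually.of_forall fun t : ℝ => ?_)).trans integral_sq_gauss
      simp [pow_two]
    · have hcongr : (fun t : ℝ => (if k = i then t else 1) * (if k = i then t else 1))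
          =ᵐ[gaussianReal 0 1] fun _ : ℝ => (1:ℝ) :=
        Filter.Eventually.of_forall fun t => by simp [hk]
      rw [integral_congr_ae hcongr]
      simp
  · rw [if_neg hil]
    refine Finset.prod_eq_zero (Finset.mem_univ i)
      ((integral_congr_ae (Filter.Eventually.of_forall fun t : ℝ => ?_)).trans
        integral_id_gauss)
    simp [hil]

/-! ### Bounds via the product weight -/

/-- product weight used for domination -/
noncomputable def P (y : Fin d → ℝ) : ℝ := ∏ i, (1 + (y i) ^ 2)

lemma my_one_le_prod {f : Fin d → ℝ} (h : ∀ i, 1 ≤ f i) : 1 ≤ ∏ i, f i := by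
  calc (1:ℝ) = ∏ _i : Fin d, (1:ℝ) := by rw [Finset.prod_const_one]
    _ ≤ ∏ i, f i := Finset.prod_le_prod (fun i _ => zero_le_one) (fun i _ => h i)

lemma my_single_le_prod {f : Fin d → ℝ} (h : ∀ i, 1 ≤ f i) (a : Fin d) :
    f a ≤ ∏ i, f i := by
  rw [← Finset.mul_prod_erase Finset.univ f (Finset.mem_univ a)]
  have h1 : (1:ℝ) ≤ ∏ i ∈ Finset.univ.erase a, f i := by
    calc (1:ℝ) = ∏ _i ∈ Finset.univ.erase a, (1:ℝ) := by rw [Finset.prod_const_one]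
      _ ≤ ∏ i ∈ Finset.univ.erase a, f i :=
        Finset.prod_le_prod (fun i _ => zero_le_one) (fun i _ => h i)
  have h0 : (0:ℝ) ≤ f a := le_trans zero_le_one (h a)
  nlinarith

lemma one_le_P (y : Fin d → ℝ) : 1 ≤ P y := by
  unfold P
  exact my_one_le_prod fun i => by nlinarith [sq_nonneg (y i)]

lemma P_nonneg (y : Fin d → ℝ) : 0 ≤ P y := le_trans zero_le_one (one_le_P y)

lemma abs_coord_le (l : Fin d) (y : Fin d → ℝ) : |y l| ≤ P y := by
  have h1 : |y l| ≤ 1 + (y l) ^ 2 := by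
    nlinarith [sq_abs (y l), abs_nonneg (y l), sq_nonneg (|y l| - 1)]
  refine h1.trans ?_
  unfold P
  exact my_single_le_prod (f := fun i => 1 + (y i) ^ 2)
    (fun i => by show (1:ℝ) ≤ 1 + (y i) ^ 2; nlinarith [sq_nonneg (y i)]) l

lemma prod_factor_le (y z : Fin d → ℝ) (i : Fin d) :
    (1 + (y i) ^ 2) * (1 + (z i) ^ 2) ≤ P y * P z := by
  have h1 : ∀ k, (1:ℝ) ≤ (1 + (y k) ^ 2) * (1 + (z k) ^ 2) := by
    intro k
    nlinarith [sq_nonneg (y k), sq_nonneg (z k), sq_nonneg (y k * z k)]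
  have h2 := my_single_le_prod h1 i
  rw [Finset.prod_mul_distrib] at h2
  exact h2

lemma abs_dot_le (y z : Fin d → ℝ) : |dot y z| ≤ d * (P y * P z) := by
  have h1 : |dot y z| ≤ ∑ i, |y i * z i| := by
    unfold dot
    exact Finset.abs_sum_le_sum_abs _ _
  have h2 : ∀ i ∈ (Finset.univ : Finset (Fin d)), |y i * z i| ≤ P y * P z := by
    intro i _
    have hb : |y i * z i| ≤ (1 + (y i) ^ 2) * (1 + (z i) ^ 2) := by
      rw [abs_mul]
      nlinarith [sq_abs (y i), sq_abs (z i), abs_nonneg (y i), abs_nonneg (z i),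
        sq_nonneg (|y i| - |z i|), sq_nonneg (y i * z i)]
    exact hb.trans (prod_factor_le y z i)
  have h3 := Finset.sum_le_card_nsmul _ _ _ h2
  rw [Finset.card_univ, Fintype.card_fin, nsmul_eq_mul] at h3
  exact h1.trans h3

lemma abs_relu_le (t : ℝ) : |relu t| ≤ |t| := by
  unfold relu
  rcases le_total t 0 with h | h
  · rw [max_eq_right h]; simp [abs_nonneg]
  · rw [max_eq_left h]

lemma integrable_P_sq : Integrable (fun y : Fin d → ℝ => (P y) ^ 2) (stdGaussian d) := by
  have h1d : Integrable (fun t : ℝ => (1 + t ^ 2) ^ 2) (gaussianReal 0 1) := by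
    have := ((integrable_pow_gauss 0).add ((integrable_pow_gauss 2).const_mul 2)).add
      (integrable_pow_gauss 4)
    refine this.congr (Filter.Eventually.of_forall fun t => ?_)
    simp only [Pi.add_apply]
    ring
  refine (integrable_prod_comp (fun _ t => (1 + t ^ 2) ^ 2) (fun _ => h1d)).congr
    (Filter.Eventually.of_forall fun y => ?_)
  show (∏ i, (1 + (y i) ^ 2) ^ 2) = (P y) ^ 2
  unfold P
  exact Finset.prod_pow _ _ _

lemma continuous_relu : Continuous relu := continuous_id.max continuous_const

lemma continuous_dot_left (x : Fin d → ℝ) : Continuous fun y : Fin d → ℝ => dot x y := by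
  unfold dot
  exact continuous_finset_sum _ fun i _ => continuous_const.mul (continuous_apply i)

lemma continuous_dot_right (z : Fin d → ℝ) : Continuous fun y : Fin d → ℝ => dot y z := by
  unfold dot
  exact continuous_finset_sum _ fun i _ => (continuous_apply i).mul continuous_const

lemma dot_comm (x y : Fin d → ℝ) : dot x y = dot y x := by
  unfold dot; exact Finset.sum_congr rfl fun i _ => mul_comm _ _

lemma dot_neg_right (x y : Fin d → ℝ) : dot x (-y) = -dot x y := by
  unfold dot; rw [← Finset.sum_neg_distrib]
  exact Finset.sum_congr rfl fun i _ => by simp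

/-! ### The key one-step computation -/

lemma integral_relu_dot_mul (x : Fin d → ℝ) (l : Fin d) :
    ∫ y, relu (dot x y) * y l ∂stdGaussian d = x l / 2 := by
  have hsplit : ∀ y : Fin d → ℝ,
      relu (dot x y) * y l = (dot x y * y l) / 2 + (|dot x y| * y l) / 2 := by
    intro y
    unfold relu
    rcases le_total (dot x y) 0 with h | h
    · rw [max_eq_right h, abs_of_nonpos h]; ring
    · rw [max_eq_left h, abs_of_nonneg h]; ring
  have hsum : (fun y : Fin d → ℝ => dot x y * y l)
      = fun y => ∑ i, x i * (y i * y l) := by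
    funext y
    unfold dot
    rw [Finset.sum_mul]
    exact Finset.sum_congr rfl fun i _ => by ring
  have h1 : Integrable (fun y : Fin d → ℝ => dot x y * y l) (stdGaussian d) := by
    rw [hsum]
    exact integrable_finset_sum _ fun i _ => (integrable_coord_mul i l).const_mul _
  have h2 : Integrable (fun y : Fin d → ℝ => |dot x y| * y l) (stdGaussian d) := by
    refine Integrable.mono' (integrable_P_sq.const_mul (d * P x))
      (((continuous_dot_left x).abs.mul (continuous_apply l)).aestronglyMeasurable)
      (Filter.Eventually.of_forall fun y => ?_)
    have hd := abs_dot_le x y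
    have hc := abs_coord_le l y
    have hP := P_nonneg y
    have hPx := P_nonneg (d := d) x
    calc ‖|dot x y| * y l‖ = |dot x y| * |y l| := by
          rw [norm_mul]; simp [abs_abs]
      _ ≤ (d * (P x * P y)) * P y := by
          apply mul_le_mul hd hc (abs_nonneg _)
          positivity
      _ = d * P x * P y ^ 2 := by ring
  have heq : (fun y : Fin d → ℝ => relu (dot x y) * y l)
      = fun y => (dot x y * y l) / 2 + (|dot x y| * y l) / 2 := funext hsplit
  rw [heq, integral_add (h1.div_const 2) (h2.div_const 2), integral_div, integral_div]
  have hA : ∫ y, dot x y * y l ∂stdGaussian d = x l := by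
    rw [hsum, integral_finset_sum _ fun i _ => (integrable_coord_mul i l).const_mul _]
    simp_rw [integral_const_mul, integral_coord_mul]
    simp [Finset.sum_ite_eq', mul_ite]
  have hB : ∫ y, |dot x y| * y l ∂stdGaussian d = 0 := by
    refine integral_odd _ (((continuous_dot_left x).abs.mul
      (continuous_apply l)).aestronglyMeasurable) fun y => ?_
    rw [dot_neg_right, abs_neg]
    simp
  rw [hA, hB]
  ring

end NTKProof

open NTKProof ProbabilityTheory

theorem coordinate_eigenfunction (d : ℕ) (hd : 1 ≤ d) (l : Fin d) (x : Fin d → ℝ) :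
    ∫ y, ntk d x y * y l ∂ stdGaussian d = x l / 4 := by
  have hIntProd : Integrable
      (Function.uncurry fun (y z : Fin d → ℝ) => relu (dot x z) * relu (dot y z) * y l)
      ((stdGaussian d).prod (stdGaussian d)) := by
    refine Integrable.mono' ((integrable_P_sq.mul_prod integrable_P_sq).const_mul
      (d * P x * d))
      ?_ (Filter.Eventually.of_forall fun p => ?_)
    · refine Continuous.aestronglyMeasurable ?_
      refine (((continuous_relu.comp ((continuous_dot_left x).comp continuous_snd)).mul
        (continuous_relu.comp ?_)).mul ((continuous_apply l).comp continuous_fst))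
      unfold dot
      exact continuous_finset_sum _ fun i _ =>
        ((continuous_apply i).comp continuous_fst).mul ((continuous_apply i).comp continuous_snd)
    · obtain ⟨y, z⟩ := p
      have h1 : |relu (dot x z)| ≤ d * (P x * P z) := (abs_relu_le _).trans (abs_dot_le x z)
      have h2 : |relu (dot y z)| ≤ d * (P y * P z) := (abs_relu_le _).trans (abs_dot_le y z)
      have h3 : |y l| ≤ P y := abs_coord_le l y
      have hPy := P_nonneg y
      have hPz := P_nonneg z
      have hPx := P_nonneg (d := d) x
      have hd0 : (0:ℝ) ≤ d := Nat.cast_nonneg d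
      calc ‖relu (dot x z) * relu (dot y z) * y l‖
          = |relu (dot x z)| * |relu (dot y z)| * |y l| := by
            rw [norm_mul, norm_mul]; rfl
        _ ≤ (d * (P x * P z)) * (d * (P y * P z)) * P y := by
            apply mul_le_mul _ h3 (abs_nonneg _) (by positivity)
            apply mul_le_mul h1 h2 (abs_nonneg _) (by positivity)
        _ = d * P x * d * (P y ^ 2 * P z ^ 2) := by ring
  calc ∫ y, ntk d x y * y l ∂stdGaussian d
      = ∫ y, ∫ z, relu (dot x z) * relu (dot y z) * y l ∂stdGaussian d ∂stdGaussian d := by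
        unfold ntk
        simp_rw [← MeasureTheory.integral_mul_const]
    _ = ∫ z, ∫ y, relu (dot x z) * relu (dot y z) * y l ∂stdGaussian d ∂stdGaussian d :=
        MeasureTheory.integral_integral_swap hIntProd
    _ = ∫ z, relu (dot x z) * (z l / 2) ∂stdGaussian d := by
        refine integral_congr_ae (Filter.Eventually.of_forall fun z => ?_)
        simp_rw [mul_assoc]
        rw [MeasureTheory.integral_const_mul]
        congr 1
        have : (fun y : Fin d → ℝ => relu (dot y z) * y l)
            = fun y => relu (dot z y) * y l := by
          funext y; rw [dot_comm]
        rw [this, integral_relu_dot_mul z l]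
    _ = x l / 4 := by
        have : (fun z : Fin d → ℝ => relu (dot x z) * (z l / 2))
            = fun z => (relu (dot x z) * z l) / 2 := by
          funext z; ring
        rw [this, integral_div, integral_relu_dot_mul x l]
        ring
end

section
/- Let d ≥ 2, let μ be the uniform probability measure on the unit sphere S^{d−1} ⊂ ℝ^d, and fix an index 2 ≤ γ ≤ d. Then for every integer n ≥ 2 there exists a constant c (depending only on n and d) such that for every unit vector x̄ ∈ S^{d−1}: ∫_{S^{d−1}} ⟨x̄,y⟩^{2n+2}·(y_γ² − y_1²) dμ(y) = c·(x̄_γ² − x̄_1²). -/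
open MeasureTheory Real

/-- The uniform probability measure on the unit sphere `S^{d-1}`, realized as a measure on
`ℝ^d` supported on the sphere: the pushforward of the (rotation-invariant) standard Gaussian
measure under radial normalization `x ↦ x/|x|`. -/
noncomputable def sphereUniform (d : ℕ) : Measure (Fin d → ℝ) :=
  (stdGaussian d).map fun x => (vnorm x)⁻¹ • x

namespace SphereAux

open ProbabilityTheory ENNReal

variable {d : ℕ}

/-! ### dot / vnorm algebra -/

lemma dot_comm (x y : Fin d → ℝ) : dot x y = dot y x :=
  Finset.sum_congr rfl fun i _ => mul_comm _ _

lemma dot_sub_left (x y z : Fin d → ℝ) : dot (x - y) z = dot x z - dot y z := by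
  unfold dot
  rw [← Finset.sum_sub_distrib]
  exact Finset.sum_congr rfl fun i _ => by simp [sub_mul]

lemma dot_smul_left (c : ℝ) (x y : Fin d → ℝ) : dot (c • x) y = c * dot x y := by
  unfold dot
  rw [Finset.mul_sum]
  exact Finset.sum_congr rfl fun i _ => by simp [mul_assoc]

lemma dot_zero_left (y : Fin d → ℝ) : dot 0 y = 0 := by simp [dot]

lemma dot_single_left (j : Fin d) (y : Fin d → ℝ) : dot (Pi.single j 1) y = y j := by
  unfold dot
  rw [Finset.sum_eq_single j]
  · simp
  · intro i _ hij; simp [Pi.single_eq_of_ne hij]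
  · simp

lemma dot_single_right (j : Fin d) (y : Fin d → ℝ) : dot y (Pi.single j 1) = y j := by
  rw [dot_comm, dot_single_left]

lemma dot_self_eq (x : Fin d → ℝ) : dot x x = ∑ i, x i ^ 2 := by
  unfold dot; exact Finset.sum_congr rfl fun i _ => (sq (x i)).symm

lemma dot_self_nonneg (x : Fin d → ℝ) : 0 ≤ dot x x := by
  rw [dot_self_eq]; positivity

lemma vnorm_sq (x : Fin d → ℝ) : vnorm x ^ 2 = dot x x := by
  rw [dot_self_eq]
  exact Real.sq_sqrt (by positivity)

lemma dot_self_pos {x : Fin d → ℝ} (hx : x ≠ 0) : 0 < dot x x := by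
  rw [dot_self_eq]
  obtain ⟨j, hj⟩ := Function.ne_iff.mp hx
  exact Finset.sum_pos' (fun i _ => sq_nonneg _)
    ⟨j, Finset.mem_univ j, pow_pos (abs_pos.mpr hj) 2 |>.trans_eq (sq_abs _) |>.trans_le le_rfl⟩

lemma vnorm_pos {x : Fin d → ℝ} (hx : x ≠ 0) : 0 < vnorm x :=
  Real.sqrt_pos.mpr (by rw [← dot_self_eq]; exact dot_self_pos hx)

lemma vnorm_smul (c : ℝ) (x : Fin d → ℝ) : vnorm (c • x) = |c| * vnorm x := by
  unfold vnorm
  have : ∑ i, (c • x) i ^ 2 = c ^ 2 * ∑ i, x i ^ 2 := by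
    rw [Finset.mul_sum]
    exact Finset.sum_congr rfl fun i _ => by simp [mul_pow]
  rw [this, Real.sqrt_mul (sq_nonneg c), Real.sqrt_sq_eq_abs]

lemma dot_self_one_of_vnorm_one {x : Fin d → ℝ} (hx : vnorm x = 1) : dot x x = 1 := by
  rw [← vnorm_sq, hx, one_pow]

/-! ### Bridge to EuclideanSpace -/

/-- The identification of `Fin d → ℝ` with `EuclideanSpace ℝ (Fin d)`. -/
noncomputable def toE (z : Fin d → ℝ) : EuclideanSpace ℝ (Fin d) :=
  (MeasurableEquiv.toLp 2 (Fin d → ℝ)).symm.symm z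

lemma toE_apply (z : Fin d → ℝ) (i : Fin d) : toE z i = z i := rfl

lemma inner_toE (x y : Fin d → ℝ) : (inner ℝ (toE x) (toE y) : ℝ) = dot x y := by
  rw [PiLp.inner_apply]
  exact Finset.sum_congr rfl fun i _ => by
    simp [RCLike.inner_apply, toE_apply, conj_trivial, mul_comm]

lemma norm_toE (x : Fin d → ℝ) : ‖toE x‖ = vnorm x := by
  rw [EuclideanSpace.norm_eq]
  unfold vnorm
  congr 1
  exact Finset.sum_congr rfl fun i _ => by
    rw [toE_apply, Real.norm_eq_abs, sq_abs]

lemma abs_dot_le (x y : Fin d → ℝ) : |dot x y| ≤ vnorm x * vnorm y := by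
  rw [← inner_toE, ← norm_toE, ← norm_toE]
  exact abs_real_inner_le_norm _ _

lemma toE_single (j : Fin d) : toE (Pi.single j (1:ℝ)) = EuclideanSpace.single j (1:ℝ) := rfl

/-! ### The Gaussian density -/

/-- Density of the standard Gaussian on `ℝ^d` w.r.t. Lebesgue. -/
noncomputable def gdens (d : ℕ) (z : Fin d → ℝ) : ℝ≥0∞ :=
  ∏ i, ENNReal.ofReal (gaussianPDFReal 0 1 (z i))

lemma gdens_measurable : Measurable (gdens d) :=
  Finset.measurable_prod _ fun i _ =>
    ((measurable_gaussianPDFReal 0 1).comp (measurable_pi_apply i)).ennreal_ofReal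

lemma gdens_eq (z : Fin d → ℝ) :
    gdens d z
      = ENNReal.ofReal ((Real.sqrt (2 * π))⁻¹ ^ d * Real.exp (-(∑ i, z i ^ 2) / 2)) := by
  have hpdf : ∀ t : ℝ, gaussianPDFReal 0 1 t = (Real.sqrt (2 * π))⁻¹ * Real.exp (-(t ^ 2) / 2) := by
    intro t
    simp [gaussianPDFReal]
  unfold gdens
  rw [← ENNReal.ofReal_prod_of_nonneg (fun i _ => gaussianPDFReal_nonneg 0 1 (z i))]
  congr 1
  calc ∏ i, gaussianPDFReal 0 1 (z i)
      = ∏ i, (Real.sqrt (2 * π))⁻¹ * Real.exp (-(z i ^ 2) / 2) := by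
        exact Finset.prod_congr rfl fun i _ => hpdf (z i)
    _ = (Real.sqrt (2 * π))⁻¹ ^ d * ∏ i, Real.exp (-(z i ^ 2) / 2) := by
        rw [Finset.prod_mul_distrib, Finset.prod_const, Finset.card_univ, Fintype.card_fin]
    _ = (Real.sqrt (2 * π))⁻¹ ^ d * Real.exp (-(∑ i, z i ^ 2) / 2) := by
        rw [← Real.exp_sum]
        congr 1
        rw [← Finset.sum_div, ← Finset.sum_neg_distrib]

lemma gdens_congr {z w : Fin d → ℝ} (h : ∑ i, w i ^ 2 = ∑ i, z i ^ 2) :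
    gdens d w = gdens d z := by rw [gdens_eq, gdens_eq, h]

/-- Product formula for lintegrals over pi-measures on `Fin m → ℝ`. -/
lemma lintegral_fin_pi_prod : ∀ {m : ℕ} (f : Fin m → ℝ → ℝ≥0∞), (∀ i, Measurable (f i)) →
    ∫⁻ z : Fin m → ℝ, ∏ i, f i (z i) ∂(Measure.pi fun _ => (volume : Measure ℝ))
      = ∏ i, ∫⁻ t, f i t := by
  intro m
  induction m with
  | zero =>
      intro f _
      simp [Measure.pi_univ, lintegral_const]
  | succ m ih =>
      intro f hf
      have hmp := (measurePreserving_piFinSuccAbove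
        (fun _ : Fin (m + 1) => (volume : Measure ℝ)) 0).symm
      have hF : Measurable fun z : Fin (m + 1) → ℝ => ∏ i, f i (z i) :=
        Finset.measurable_prod _ fun i _ => (hf i).comp (measurable_pi_apply i)
      rw [← hmp.lintegral_comp hF]
      simp_rw [MeasurableEquiv.piFinSuccAbove_symm_apply, Fin.insertNthEquiv,
        Fin.prod_univ_succ, Fin.insertNth_zero, Equiv.coe_fn_mk, Fin.cons_succ, Fin.cons_zero]
      simp only [Fin.zero_succAbove, cast_eq, Function.comp_def, Fin.cons_zero, Fin.cons_succ]
      trans (∫⁻ t, f 0 t) * ∫⁻ z : Fin m → ℝ, ∏ i, f i.succ (z i)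
          ∂(Measure.pi fun _ => (volume : Measure ℝ))
      · exact lintegral_prod_mul (μ := (volume : Measure ℝ))
          (ν := Measure.pi fun _ : Fin m => (volume : Measure ℝ)) (f := f 0)
          (g := fun z : Fin m → ℝ => ∏ i, f i.succ (z i)) (hf 0).aemeasurable
          (Finset.measurable_prod _ fun i _ =>
            ((hf i.succ).comp (measurable_pi_apply i))).aemeasurable
      · rw [ih (fun i => f i.succ) (fun i => hf i.succ)]

lemma stdGaussian_eq_withDensity :
    stdGaussian d = (volume : Measure (Fin d → ℝ)).withDensity (gdens d) := by
  apply Measure.pi_eq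
  intro s hs
  rw [withDensity_apply _ (MeasurableSet.univ_pi hs),
    ← lintegral_indicator (MeasurableSet.univ_pi hs)]
  have hind : ∀ z : Fin d → ℝ, (Set.univ.pi s).indicator (gdens d) z
      = ∏ i, (s i).indicator (fun t => ENNReal.ofReal (gaussianPDFReal 0 1 t)) (z i) := by
    intro z
    by_cases hz : z ∈ Set.univ.pi s
    · rw [Set.indicator_of_mem hz]
      exact Finset.prod_congr rfl fun i _ =>
        (Set.indicator_of_mem (hz i (Set.mem_univ i))
          (fun t => ENNReal.ofReal (gaussianPDFReal 0 1 t))).symm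
    · rw [Set.indicator_of_notMem hz]
      have : ∃ i, z i ∉ s i := by
        by_contra hcon
        push_neg at hcon
        exact hz fun i _ => hcon i
      obtain ⟨i, his⟩ := this
      exact (Finset.prod_eq_zero (Finset.mem_univ i)
        (Set.indicator_of_notMem his _)).symm
  rw [lintegral_congr hind, volume_pi,
    lintegral_fin_pi_prod _ (fun i =>
      (((measurable_gaussianPDFReal 0 1).ennreal_ofReal).indicator (hs i)))]
  refine Finset.prod_congr rfl fun i _ => ?_
  rw [gaussianReal_of_var_ne_zero _ one_ne_zero, withDensity_apply _ (hs i),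
    ← lintegral_indicator (hs i)]
  exact (lintegral_congr fun t => by rw [gaussianPDF_def]).symm

/-! ### Invariance of the Gaussian and the sphere measure under isometries -/

lemma map_withDensity_invariant {α : Type*} [MeasurableSpace α] (ν : Measure α)
    (h : α → ℝ≥0∞) (hh : Measurable h) (T : α ≃ᵐ α) (hT : MeasurePreserving T ν ν)
    (hinv : ∀ z, h (T z) = h z) :
    (ν.withDensity h).map T = ν.withDensity h := by
  ext s hs
  rw [Measure.map_apply T.measurable hs, withDensity_apply _ (T.measurable hs),
    withDensity_apply _ hs]
  calc ∫⁻ x in T ⁻¹' s, h x ∂ν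
      = ∫⁻ x in T ⁻¹' s, h (T x) ∂ν :=
        setLIntegral_congr_fun (T.measurable hs)
          (fun x _ => (hinv x).symm)
    _ = ∫⁻ y in s, h y ∂(ν.map T) := (setLIntegral_map hs hh T.measurable).symm
    _ = ∫⁻ y in s, h y ∂ν := by rw [hT.map_eq]

/-- An isometry of `EuclideanSpace ℝ (Fin d)`, transferred to `Fin d → ℝ`. -/
noncomputable def rotPi (d : ℕ)
    (R : EuclideanSpace ℝ (Fin d) ≃ₗᵢ[ℝ] EuclideanSpace ℝ (Fin d)) :
    (Fin d → ℝ) ≃ᵐ (Fin d → ℝ) :=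
  ((MeasurableEquiv.toLp 2 (Fin d → ℝ)).symm.symm.trans
    R.toHomeomorph.toMeasurableEquiv).trans (MeasurableEquiv.toLp 2 (Fin d → ℝ)).symm

variable {R : EuclideanSpace ℝ (Fin d) ≃ₗᵢ[ℝ] EuclideanSpace ℝ (Fin d)}

lemma rotPi_apply (z : Fin d → ℝ) (i : Fin d) : rotPi d R z i = R (toE z) i := rfl

lemma toE_rotPi (z : Fin d → ℝ) : toE (rotPi d R z) = R (toE z) := rfl

lemma sum_sq_toE (w : EuclideanSpace ℝ (Fin d)) : ∑ i, w i ^ 2 = ‖w‖ ^ 2 := by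
  rw [EuclideanSpace.norm_eq, Real.sq_sqrt (by positivity)]
  exact Finset.sum_congr rfl fun i _ => by rw [Real.norm_eq_abs, sq_abs]

lemma sum_sq_rotPi (z : Fin d → ℝ) : ∑ i, rotPi d R z i ^ 2 = ∑ i, z i ^ 2 := by
  have h1 : ∑ i, rotPi d R z i ^ 2 = ∑ i, (R (toE z)) i ^ 2 :=
    Finset.sum_congr rfl fun i _ => by rw [rotPi_apply]
  rw [h1, sum_sq_toE, R.norm_map, ← sum_sq_toE]
  exact Finset.sum_congr rfl fun i _ => by rw [toE_apply]

lemma vnorm_rotPi (z : Fin d → ℝ) : vnorm (rotPi d R z) = vnorm z := by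
  unfold vnorm; rw [sum_sq_rotPi]

lemma rotPi_measurePreserving_volume :
    MeasurePreserving (rotPi d R) (volume : Measure (Fin d → ℝ)) volume := by
  have e1 := (EuclideanSpace.volume_preserving_symm_measurableEquiv_toLp (Fin d))
  have e2 := R.measurePreserving
  have : MeasurePreserving
      ((MeasurableEquiv.toLp 2 (Fin d → ℝ)).symm ∘ (⇑R ∘ ⇑(MeasurableEquiv.toLp 2 (Fin d → ℝ)).symm.symm))
      (volume : Measure (Fin d → ℝ)) volume :=
    e1.comp (e2.comp e1.symm)
  exact this

lemma stdGaussian_map_rotPi : (stdGaussian d).map (rotPi d R) = stdGaussian d := by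
  rw [stdGaussian_eq_withDensity]
  exact map_withDensity_invariant _ _ gdens_measurable _ rotPi_measurePreserving_volume
    (fun z => gdens_congr (sum_sq_rotPi z))

lemma measurable_vnorm : Measurable (vnorm : (Fin d → ℝ) → ℝ) := by
  have : Continuous (vnorm : (Fin d → ℝ) → ℝ) := by
    unfold vnorm
    exact Real.continuous_sqrt.comp
      (continuous_finset_sum _ fun i _ => (continuous_apply i).pow 2)
  exact this.measurable

lemma measurable_normalize : Measurable (fun x : Fin d → ℝ => (vnorm x)⁻¹ • x) := by
  have : (fun x : Fin d → ℝ => (vnorm x)⁻¹ • x)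
      = fun x => fun i => (vnorm x)⁻¹ * x i := by
    funext x i; simp
  rw [this]
  exact measurable_pi_lambda _ fun i =>
    (measurable_vnorm.inv.mul (measurable_pi_apply i))

lemma rotPi_smul (c : ℝ) (z : Fin d → ℝ) : rotPi d R (c • z) = c • rotPi d R z := by
  funext i
  rw [rotPi_apply]
  have h1 : toE (c • z) = c • toE z := rfl
  rw [h1, R.map_smul]
  simp [rotPi_apply]

lemma sphereUniform_map_rotPi : (sphereUniform d).map (rotPi d R) = sphereUniform d := by
  unfold sphereUniform
  rw [Measure.map_map (rotPi d R).measurable measurable_normalize]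
  have hcomm : (⇑(rotPi d R)) ∘ (fun x : Fin d → ℝ => (vnorm x)⁻¹ • x)
      = (fun x : Fin d → ℝ => (vnorm x)⁻¹ • x) ∘ ⇑(rotPi d R) := by
    funext z
    simp only [Function.comp_apply]
    rw [rotPi_smul, vnorm_rotPi]
  rw [hcomm, ← Measure.map_map measurable_normalize (rotPi d R).measurable,
    stdGaussian_map_rotPi]

lemma integral_rotPi (f : (Fin d → ℝ) → ℝ) :
    ∫ y, f (rotPi d R y) ∂sphereUniform d = ∫ y, f y ∂sphereUniform d :=
  MeasurePreserving.integral_comp ⟨(rotPi d R).measurable, sphereUniform_map_rotPi⟩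
    (rotPi d R).measurableEmbedding f

/-! ### Basic facts about `sphereUniform` -/

instance : IsProbabilityMeasure (stdGaussian d) := by
  unfold _root_.stdGaussian; infer_instance

instance : IsProbabilityMeasure (sphereUniform d) :=
  Measure.isProbabilityMeasure_map measurable_normalize.aemeasurable

lemma ae_vnorm_one (hd : 1 ≤ d) : ∀ᵐ y ∂sphereUniform d, vnorm y = 1 := by
  unfold sphereUniform
  rw [ae_map_iff measurable_normalize.aemeasurable
    (measurableSet_eq_fun measurable_vnorm measurable_const)]
  have h0 : stdGaussian d {0} = 0 := by
    rw [stdGaussian_eq_withDensity]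
    refine withDensity_absolutelyContinuous _ _ ?_
    have : ({0} : Set (Fin d → ℝ)) = Set.univ.pi fun _ => ({0} : Set ℝ) := by
      ext z
      simp [funext_iff]
    rw [this, volume_pi, Measure.pi_pi]
    exact Finset.prod_eq_zero (Finset.mem_univ (⟨0, hd⟩ : Fin d)) Real.volume_singleton
  have hne : ∀ᵐ z ∂stdGaussian d, z ≠ (0 : Fin d → ℝ) := by
    rw [ae_iff]
    refine measure_mono_null ?_ h0
    intro z hz
    simpa using hz
  filter_upwards [hne] with z hz
  rw [vnorm_smul, abs_inv, abs_of_nonneg (vnorm_pos hz).le]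
  exact inv_mul_cancel₀ (ne_of_gt (vnorm_pos hz))

lemma integrable_pow_pow (x u : Fin d → ℝ) (p q : ℕ) (hd : 1 ≤ d) :
    Integrable (fun y => dot x y ^ p * dot u y ^ q) (sphereUniform d) := by
  have hcont : Continuous fun y : Fin d → ℝ => dot x y ^ p * dot u y ^ q := by
    have hdot : ∀ v : Fin d → ℝ, Continuous fun y : Fin d → ℝ => dot v y := fun v =>
      continuous_finset_sum _ fun i _ => continuous_const.mul (continuous_apply i)
    exact ((hdot x).pow p).mul ((hdot u).pow q)
  refine Integrable.mono' (integrable_const (vnorm x ^ p * vnorm u ^ q))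
    hcont.measurable.aestronglyMeasurable ?_
  filter_upwards [ae_vnorm_one hd] with y hy
  rw [Real.norm_eq_abs, abs_mul, abs_pow, abs_pow]
  have hx := abs_dot_le x y
  have hu := abs_dot_le u y
  rw [hy, mul_one] at hx hu
  exact mul_le_mul (pow_le_pow_left₀ (abs_nonneg _) hx p)
    (pow_le_pow_left₀ (abs_nonneg _) hu q) (by positivity)
    (pow_nonneg (Real.sqrt_nonneg _) p)

end SphereAux

namespace SphereAux

open ProbabilityTheory

variable {d : ℕ}

lemma dot_sub_right (x y z : Fin d → ℝ) : dot x (y - z) = dot x y - dot x z := by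
  rw [dot_comm, dot_sub_left, dot_comm y x, dot_comm z x]

lemma dot_smul_right (c : ℝ) (x y : Fin d → ℝ) : dot x (c • y) = c * dot x y := by
  rw [dot_comm, dot_smul_left, dot_comm]

lemma dot_neg_left (x y : Fin d → ℝ) : dot (-x) y = -dot x y := by
  have : (-x : Fin d → ℝ) = (-1 : ℝ) • x := by funext i; simp
  rw [this, dot_smul_left]; ring

lemma dot_neg_right (x y : Fin d → ℝ) : dot x (-y) = -dot x y := by
  rw [dot_comm, dot_neg_left, dot_comm]

/-- Existence of an isometry carrying the first two coordinate vectors to a given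
orthonormal pair. -/
lemma exists_rot (hd : 2 ≤ d) (x u : Fin d → ℝ) (hx : dot x x = 1) (hu : dot u u = 1)
    (hxu : dot x u = 0) :
    ∃ R : EuclideanSpace ℝ (Fin d) ≃ₗᵢ[ℝ] EuclideanSpace ℝ (Fin d),
      (∀ y, dot x (rotPi d R y) = y ⟨0, Nat.lt_of_lt_of_le two_pos hd⟩) ∧
      (∀ y, dot u (rotPi d R y) = y ⟨1, by omega⟩) := by
  classical
  set i0 : Fin d := ⟨0, by omega⟩ with hi0
  set i1 : Fin d := ⟨1, by omega⟩ with hi1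
  have hne : i0 ≠ i1 := by simp [hi0, hi1, Fin.ext_iff]
  have hux : dot u x = 0 := by rw [dot_comm]; exact hxu
  set v : Fin d → EuclideanSpace ℝ (Fin d) := fun j => if j = i0 then toE x else toE u with hv
  have hv0 : v i0 = toE x := if_pos rfl
  have hv1 : v i1 = toE u := if_neg (Ne.symm hne)
  have hortho : Orthonormal ℝ (Set.restrict ({i0, i1} : Set (Fin d)) v) := by
    rw [orthonormal_iff_ite]
    rintro ⟨i, hi⟩ ⟨j, hj⟩
    simp only [Set.mem_insert_iff, Set.mem_singleton_iff] at hi hj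
    simp only [Set.restrict, Set.restrict_apply, Subtype.mk.injEq]
    rcases hi with rfl | rfl <;> rcases hj with rfl | rfl
    · rw [hv0, inner_toE, hx, if_pos rfl]
    · rw [hv0, hv1, inner_toE, hxu, if_neg hne]
    · rw [hv1, hv0, inner_toE, hux, if_neg (Ne.symm hne)]
    · rw [hv1, inner_toE, hu, if_pos rfl]
  obtain ⟨b, hb⟩ := hortho.exists_orthonormalBasis_extension_of_card_eq
    (by simp [finrank_euclideanSpace_fin]) 
  have hb0 : b i0 = toE x := by
    have := hb i0 (by simp)
    simpa [hv] using this
  have hb1 : b i1 = toE u := by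
    have := hb i1 (by simp)
    simpa [hv, hne.symm] using this
  refine ⟨b.repr.symm, ?_, ?_⟩
  · intro y
    calc dot x (rotPi d b.repr.symm y)
        = (inner ℝ (toE x) (toE (rotPi d b.repr.symm y)) : ℝ) := (inner_toE _ _).symm
      _ = (inner ℝ (b.repr.symm (EuclideanSpace.single i0 1)) (b.repr.symm (toE y)) : ℝ) := by
          rw [OrthonormalBasis.repr_symm_single, hb0]; rfl
      _ = (inner ℝ (EuclideanSpace.single i0 (1:ℝ)) (toE y) : ℝ) := by
          exact b.repr.symm.inner_map_map _ _
      _ = y i0 := by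
          rw [EuclideanSpace.inner_single_left]
          simp [toE_apply]
  · intro y
    calc dot u (rotPi d b.repr.symm y)
        = (inner ℝ (toE u) (toE (rotPi d b.repr.symm y)) : ℝ) := (inner_toE _ _).symm
      _ = (inner ℝ (b.repr.symm (EuclideanSpace.single i1 1)) (b.repr.symm (toE y)) : ℝ) := by
          rw [OrthonormalBasis.repr_symm_single, hb1]; rfl
      _ = (inner ℝ (EuclideanSpace.single i1 (1:ℝ)) (toE y) : ℝ) := by
          exact b.repr.symm.inner_map_map _ _
      _ = y i1 := by
          rw [EuclideanSpace.inner_single_left]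
          simp [toE_apply]

/-- Every unit vector has a unit vector orthogonal to it (`d ≥ 2`). -/
lemma exists_perp (hd : 2 ≤ d) (x : Fin d → ℝ) (hx : dot x x = 1) :
    ∃ u : Fin d → ℝ, dot u u = 1 ∧ dot x u = 0 := by
  classical
  set i0 : Fin d := ⟨0, by omega⟩ with hi0
  set i1 : Fin d := ⟨1, by omega⟩ with hi1
  have hne : i0 ≠ i1 := by simp [hi0, hi1, Fin.ext_iff]
  set v : Fin d → EuclideanSpace ℝ (Fin d) := fun _ => toE x with hv
  have hortho : Orthonormal ℝ (Set.restrict ({i0} : Set (Fin d)) v) := by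
    rw [orthonormal_iff_ite]
    rintro ⟨i, hi⟩ ⟨j, hj⟩
    simp only [Set.mem_singleton_iff] at hi hj
    subst hi; subst hj
    simp only [Set.restrict, Set.restrict_apply, Subtype.mk.injEq, hv]
    rw [inner_toE, hx]
    simp
  obtain ⟨b, hb⟩ := hortho.exists_orthonormalBasis_extension_of_card_eq
    (by simp [finrank_euclideanSpace_fin])
  have hb0 : b i0 = toE x := by
    have := hb i0 (by simp)
    simpa [hv] using this
  have hto : toE ((MeasurableEquiv.toLp 2 (Fin d → ℝ)).symm (b i1)) = b i1 :=
    (MeasurableEquiv.toLp 2 (Fin d → ℝ)).symm.symm_apply_apply _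
  refine ⟨(MeasurableEquiv.toLp 2 (Fin d → ℝ)).symm (b i1), ?_, ?_⟩
  · have h := (orthonormal_iff_ite.mp b.orthonormal) i1 i1
    rw [if_pos rfl] at h
    rw [← inner_toE, hto]
    exact h
  · have h := (orthonormal_iff_ite.mp b.orthonormal) i0 i1
    rw [if_neg hne] at h
    rw [← inner_toE, hto, ← hb0]
    exact h

lemma transport (hd : 2 ≤ d) (p q : ℕ) (x u : Fin d → ℝ) (hx : dot x x = 1)
    (hu : dot u u = 1) (hxu : dot x u = 0) :
    ∫ y, dot x y ^ p * dot u y ^ q ∂sphereUniform d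
      = ∫ y, y (⟨0, Nat.lt_of_lt_of_le two_pos hd⟩ : Fin d) ^ p * y (⟨1, by omega⟩ : Fin d) ^ q
          ∂sphereUniform d := by
  obtain ⟨R, hR1, hR2⟩ := exists_rot hd x u hx hu hxu
  rw [← integral_rotPi (R := R) (fun y => dot x y ^ p * dot u y ^ q)]
  simp only [hR1, hR2]

lemma transport0 (hd : 2 ≤ d) (p : ℕ) (x : Fin d → ℝ) (hx : dot x x = 1) :
    ∫ y, dot x y ^ p ∂sphereUniform d
      = ∫ y, y (⟨0, Nat.lt_of_lt_of_le two_pos hd⟩ : Fin d) ^ p ∂sphereUniform d := by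
  obtain ⟨u, hu, hxu⟩ := exists_perp hd x hx
  have h := transport hd p 0 x u hx hu hxu
  simpa [pow_zero, mul_one] using h

lemma A_odd_zero (hd : 2 ≤ d) (p : ℕ) :
    ∫ y, y (⟨0, Nat.lt_of_lt_of_le two_pos hd⟩ : Fin d) ^ p * y (⟨1, by omega⟩ : Fin d) ^ 1
      ∂sphereUniform d = 0 := by
  classical
  set i0 : Fin d := ⟨0, by omega⟩ with hi0
  set i1 : Fin d := ⟨1, by omega⟩ with hi1
  have hne : i0 ≠ i1 := by simp [hi0, hi1, Fin.ext_iff]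
  have h1 : dot (Pi.single i0 (1:ℝ)) (Pi.single i0 (1:ℝ)) = 1 := by
    rw [dot_single_left, Pi.single_eq_same]
  have h2 : dot (-(Pi.single i1 (1:ℝ))) (-(Pi.single i1 (1:ℝ))) = 1 := by
    rw [dot_neg_left, dot_neg_right, dot_single_left, Pi.single_eq_same]; ring
  have h3 : dot (Pi.single i0 (1:ℝ)) (-(Pi.single i1 (1:ℝ))) = 0 := by
    rw [dot_single_left]
    simp [Pi.single_eq_of_ne hne]
  have h := transport hd p 1 (Pi.single i0 (1:ℝ)) (-(Pi.single i1 (1:ℝ))) h1 h2 h3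
  have hpt : ∀ y : Fin d → ℝ, dot (Pi.single i0 (1:ℝ)) y ^ p
        * dot (-(Pi.single i1 (1:ℝ))) y ^ 1
      = -(y i0 ^ p * y i1 ^ 1) := by
    intro y
    rw [dot_neg_left, dot_single_left, dot_single_left]
    ring
  rw [integral_congr_ae (Filter.Eventually.of_forall hpt), integral_neg] at h
  linarith

lemma coordSq (hd : 2 ≤ d) (n : ℕ) (x : Fin d → ℝ) (hx : dot x x = 1) (i : Fin d) :
    ∫ y, dot x y ^ (2 * n + 2) * y i ^ 2 ∂sphereUniform d
      = (∫ y, y (⟨0, Nat.lt_of_lt_of_le two_pos hd⟩ : Fin d) ^ (2 * n + 4) ∂sphereUniform d) * x i ^ 2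
        + (∫ y, y (⟨0, Nat.lt_of_lt_of_le two_pos hd⟩ : Fin d) ^ (2 * n + 2)
              * y (⟨1, by omega⟩ : Fin d) ^ 2 ∂sphereUniform d) * (1 - x i ^ 2) := by
  classical
  have hd1 : 1 ≤ d := by omega
  set u : Fin d → ℝ := Pi.single i 1 with hu_def
  set w : Fin d → ℝ := u - x i • x with hw_def
  have hdu : ∀ y, dot u y = y i := fun y => dot_single_left i y
  have hw_y : ∀ y, dot w y = y i - x i * dot x y := by
    intro y; rw [hw_def, dot_sub_left, dot_smul_left, hdu]
  have hxw : dot x w = 0 := by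
    rw [dot_comm, hw_y x, hx]; ring
  have hww : dot w w = 1 - x i ^ 2 := by
    rw [hw_y w, hxw, mul_zero, sub_zero, hw_def]
    simp [hu_def, Pi.single_eq_same]
    ring
  have key : ∀ y, dot x y ^ (2*n+2) * y i ^ 2
      = x i ^ 2 * dot x y ^ (2*n+4)
        + (2 * x i) * (dot x y ^ (2*n+3) * dot w y ^ 1)
        + dot x y ^ (2*n+2) * dot w y ^ 2 := by
    intro y
    have h1 : y i = x i * dot x y + dot w y := by rw [hw_y y]; ring
    rw [h1]; ring
  have Ip : ∀ p, Integrable (fun y => dot x y ^ p) (sphereUniform d) := fun p => by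
    simpa using integrable_pow_pow x x p 0 hd1
  have Ipw : ∀ p q, Integrable (fun y => dot x y ^ p * dot w y ^ q) (sphereUniform d) :=
    fun p q => integrable_pow_pow x w p q hd1
  have hI1 : Integrable (fun y => x i ^ 2 * dot x y ^ (2*n+4)) (sphereUniform d) :=
    (Ip (2*n+4)).const_mul _
  have hI2 : Integrable (fun y => (2 * x i) * (dot x y ^ (2*n+3) * dot w y ^ 1))
      (sphereUniform d) := (Ipw (2*n+3) 1).const_mul _
  have hI3 : Integrable (fun y => dot x y ^ (2*n+2) * dot w y ^ 2) (sphereUniform d) :=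
    Ipw (2*n+2) 2
  have E1 : ∫ y, dot x y ^ (2*n+4) ∂sphereUniform d
      = ∫ y, y (⟨0, by omega⟩ : Fin d) ^ (2*n+4) ∂sphereUniform d := transport0 hd _ x hx
  have E2 : ∫ y, dot x y ^ (2*n+3) * dot w y ^ 1 ∂sphereUniform d = 0 := by
    by_cases hw0 : w = 0
    · simp [hw0, dot_zero_left]
    · have hc : 0 < vnorm w := vnorm_pos hw0
      have hcw : dot w w = vnorm w ^ 2 := (vnorm_sq w).symm
      set c := vnorm w with hc_def
      have hc0 : c ≠ 0 := ne_of_gt hc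
      set wh : Fin d → ℝ := c⁻¹ • w with hwh_def
      have hwhwh : dot wh wh = 1 := by
        rw [hwh_def, dot_smul_left, dot_smul_right, hcw]
        field_simp
      have hxwh : dot x wh = 0 := by rw [hwh_def, dot_smul_right, hxw]; ring
      have hwy : ∀ y, dot w y = c * dot wh y := by
        intro y
        rw [hwh_def, dot_smul_left]
        field_simp
      have hcong : ∀ y, dot x y ^ (2*n+3) * dot w y ^ 1
          = c * (dot x y ^ (2*n+3) * dot wh y ^ 1) := fun y => by rw [hwy y]; ring
      rw [integral_congr_ae (Filter.Eventually.of_forall hcong), integral_const_mul,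
        transport hd (2*n+3) 1 x wh hx hwhwh hxwh, A_odd_zero hd (2*n+3), mul_zero]
  have E3 : ∫ y, dot x y ^ (2*n+2) * dot w y ^ 2 ∂sphereUniform d
      = (∫ y, y (⟨0, by omega⟩ : Fin d) ^ (2*n+2)
          * y (⟨1, by omega⟩ : Fin d) ^ 2 ∂sphereUniform d) * (1 - x i ^ 2) := by
    by_cases hw0 : w = 0
    · have : (1 : ℝ) - x i ^ 2 = 0 := by rw [← hww, hw0, dot_zero_left]
      rw [this, mul_zero]
      simp [hw0, dot_zero_left]
    · have hc : 0 < vnorm w := vnorm_pos hw0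
      have hcw : dot w w = vnorm w ^ 2 := (vnorm_sq w).symm
      set c := vnorm w with hc_def
      have hc0 : c ≠ 0 := ne_of_gt hc
      set wh : Fin d → ℝ := c⁻¹ • w with hwh_def
      have hwhwh : dot wh wh = 1 := by
        rw [hwh_def, dot_smul_left, dot_smul_right, hcw]
        field_simp
      have hxwh : dot x wh = 0 := by rw [hwh_def, dot_smul_right, hxw]; ring
      have hwy : ∀ y, dot w y = c * dot wh y := by
        intro y
        rw [hwh_def, dot_smul_left]
        field_simp
      have hcong : ∀ y, dot x y ^ (2*n+2) * dot w y ^ 2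
          = c ^ 2 * (dot x y ^ (2*n+2) * dot wh y ^ 2) := fun y => by rw [hwy y]; ring
      rw [integral_congr_ae (Filter.Eventually.of_forall hcong), integral_const_mul,
        transport hd (2*n+2) 2 x wh hx hwhwh hxwh]
      rw [← hcw, hww]
      ring
  have hI12 : Integrable (fun y => x i ^ 2 * dot x y ^ (2*n+4)
      + (2 * x i) * (dot x y ^ (2*n+3) * dot w y ^ 1)) (sphereUniform d) := hI1.add hI2
  rw [integral_congr_ae (Filter.Eventually.of_forall key), integral_add hI12 hI3,
    integral_add hI1 hI2, integral_const_mul, integral_const_mul, E1, E2, E3]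
  ring

end SphereAux

/-- One-based indices `2 ≤ γ ≤ d` correspond to zero-based indices `γ ≠ 0`; the first
coordinate `y_1` is `y ⟨0, _⟩`. -/
theorem sphere_integral_diff_squares (d : ℕ) (hd : 2 ≤ d) (γ : Fin d)
    (hγ : γ ≠ ⟨0, by omega⟩) (n : ℕ) (hn : 2 ≤ n) :
    ∃ c : ℝ, ∀ x : Fin d → ℝ, vnorm x = 1 →
      ∫ y, dot x y ^ (2 * n + 2) * (y γ ^ 2 - y ⟨0, by omega⟩ ^ 2) ∂ sphereUniform d
        = c * (x γ ^ 2 - x ⟨0, by omega⟩ ^ 2) := by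
  classical
  have hd1 : 1 ≤ d := by omega
  refine ⟨(∫ y, y (⟨0, by omega⟩ : Fin d) ^ (2*n+4) ∂sphereUniform d)
    - ∫ y, y (⟨0, by omega⟩ : Fin d) ^ (2*n+2)
        * y (⟨1, by omega⟩ : Fin d) ^ 2 ∂sphereUniform d, ?_⟩
  intro x hx
  have hxx : dot x x = 1 := SphereAux.dot_self_one_of_vnorm_one hx
  have key : ∀ y : Fin d → ℝ,
      dot x y ^ (2*n+2) * (y γ ^ 2 - y (⟨0, by omega⟩ : Fin d) ^ 2)
        = dot x y ^ (2*n+2) * y γ ^ 2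
          - dot x y ^ (2*n+2) * y (⟨0, by omega⟩ : Fin d) ^ 2 := fun y => by ring
  have Iγ : Integrable (fun y => dot x y ^ (2*n+2) * y γ ^ 2) (sphereUniform d) := by
    have := SphereAux.integrable_pow_pow x (Pi.single γ 1) (2*n+2) 2 hd1
    simpa [SphereAux.dot_single_left] using this
  have I0 : Integrable (fun y => dot x y ^ (2*n+2) * y (⟨0, by omega⟩ : Fin d) ^ 2)
      (sphereUniform d) := by
    have := SphereAux.integrable_pow_pow x (Pi.single (⟨0, by omega⟩ : Fin d) 1) (2*n+2) 2 hd1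
    simpa [SphereAux.dot_single_left] using this
  rw [integral_congr_ae (Filter.Eventually.of_forall key), integral_sub Iγ I0,
    SphereAux.coordSq hd n x hxx γ, SphereAux.coordSq hd n x hxx ⟨0, by omega⟩]
  ring
end

section
/- Let d ≥ 2 and let γ_d be the standard Gaussian measure on ℝ^d. For n ≥ 0 define the truncated kernel k^{(n)}(x,y) = |x||y|/(2π) + ⟨x,y⟩/4 + (1/(2π))·Σ_{l=0}^{n} C(2l,l)·⟨x,y⟩^{2l+2}/(2^{2l}(2l+1)(2l+2)(|x||y|)^{2l+1}) for nonzero x,y. Let n ∈ {0, 1, …, ⌊(d−2)/2⌋} and let α_1 < α_2 < ⋯ < α_{2n+2} be distinct indices in {1,…,d}. Then the function f(x) = (∏_{i=1}^{2n+2} x_{α_i}) / |x|^{2n+1} is an eigenfunction of k^{(n)}: there exists λ ∈ ℝ such that ∫ k^{(n)}(x,y) f(y) dγ_d(y) = λ·f(x) for all nonzero x. -/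
open MeasureTheory Real

/-- The truncated kernel `k^{(n)}(x,y)`; note that the `l = 0` term of the sum is
`⟨x,y⟩²/(4π|x||y|)`. -/
noncomputable def kTrunc (d n : ℕ) (x y : Fin d → ℝ) : ℝ :=
  vnorm x * vnorm y / (2 * π) + dot x y / 4
    + (1 / (2 * π)) * ∑ l ∈ Finset.range (n + 1), ntkTerm x y l

instance (d : ℕ) : IsProbabilityMeasure (stdGaussian d) := by
  unfold stdGaussian; infer_instance

lemma gaussian_neg_mp : MeasurePreserving (fun t : ℝ => -t)
    (ProbabilityTheory.gaussianReal 0 1) (ProbabilityTheory.gaussianReal 0 1) := by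
  refine ⟨measurable_neg, ?_⟩
  have h := ProbabilityTheory.gaussianReal_map_const_mul (μ := 0) (v := 1) (-1)
  have e1 : ((-1 : ℝ) * ·) = (fun t : ℝ => -t) := by funext t; ring
  rw [e1] at h
  rw [h]
  congr 1
  · ring
  · ext; norm_num

/-- flip the sign of coordinate β -/
def flipCoord {d : ℕ} (β : Fin d) : (Fin d → ℝ) ≃ᵐ (Fin d → ℝ) where
  toFun y := fun i => if i = β then -(y i) else y i
  invFun y := fun i => if i = β then -(y i) else y i
  left_inv y := by ext i; by_cases h : i = β <;> simp [h]
  right_inv y := by ext i; by_cases h : i = β <;> simp [h]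
  measurable_toFun := by
    apply measurable_pi_iff.mpr
    intro i
    show Measurable fun x : Fin d → ℝ => if i = β then -(x i) else x i
    split_ifs with h
    · exact (measurable_pi_apply _).neg
    · exact measurable_pi_apply _
  measurable_invFun := by
    apply measurable_pi_iff.mpr
    intro i
    show Measurable fun x : Fin d → ℝ => if i = β then -(x i) else x i
    split_ifs with h
    · exact (measurable_pi_apply _).neg
    · exact measurable_pi_apply _

lemma flipCoord_mp {d : ℕ} (β : Fin d) :
    MeasurePreserving (flipCoord β) (stdGaussian d) (stdGaussian d) := by
  have := measurePreserving_pi (fun _ : Fin d => ProbabilityTheory.gaussianReal 0 1)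
    (fun _ : Fin d => ProbabilityTheory.gaussianReal 0 1)
    (f := fun i t => if i = β then -t else t)
    (fun i => by by_cases h : i = β <;> simp [h] <;> [exact gaussian_neg_mp;
      exact MeasurePreserving.id _])
  exact this

lemma vnorm_flip {d : ℕ} (β : Fin d) (y : Fin d → ℝ) : vnorm (flipCoord β y) = vnorm y := by
  unfold vnorm
  congr 1
  apply Finset.sum_congr rfl
  intro i _
  by_cases h : i = β <;> simp [flipCoord, h]

section Counting

variable {d : ℕ} {ι : Type*} [Fintype ι]

/-- number of `j` with `q j = β` -/
def cnt (q : ι → Fin d) (β : Fin d) : ℕ := (Finset.univ.filter fun j => q j = β).card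

lemma prod_comp_eq (q : ι → Fin d) (v : Fin d → ℝ) :
    (∏ j, v (q j)) = ∏ β, v β ^ cnt q β := by
  rw [← Finset.prod_fiberwise_of_maps_to (g := q) (fun j _ => Finset.mem_univ (q j))
    (fun j => v (q j))]
  refine Finset.prod_congr rfl fun β _ => ?_
  have h1 : ∏ j ∈ Finset.univ.filter (fun j => q j = β), v (q j)
      = ∏ _j ∈ Finset.univ.filter (fun j => q j = β), v β :=
    Finset.prod_congr rfl (fun j hj => by rw [(Finset.mem_filter.mp hj).2])
  rw [h1, Finset.prod_const]
  rfl

lemma sum_cnt (q : ι → Fin d) : ∑ β, cnt q β = Fintype.card ι :=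
  (Finset.card_eq_sum_card_fiberwise (fun j _ => Finset.mem_univ (q j))).symm

lemma exists_odd_cnt (q : ι → Fin d) (hcard : Odd (Fintype.card ι)) :
    ∃ β, Odd (cnt q β) := by
  by_contra h
  push_neg at h
  simp only [Nat.not_odd_iff_even] at h
  have : Even (∑ β, cnt q β) := Finset.even_sum _ (fun β _ => h β)
  rw [sum_cnt] at this
  exact (Nat.not_odd_iff_even.mpr this) hcard

end Counting

lemma integral_vanish {d : ℕ} {ι : Type*} [Fintype ι] (q : ι → Fin d) (p : ℕ) (β : Fin d)
    (hodd : Odd (cnt q β)) :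
    ∫ y, (∏ j, y (q j)) / vnorm y ^ p ∂ stdGaussian d = 0 := by
  set F : (Fin d → ℝ) → ℝ := fun y => (∏ j, y (q j)) / vnorm y ^ p with hF
  have key : ∀ y, F (flipCoord β y) = -F y := by
    intro y
    show (∏ j, (flipCoord β y) (q j)) / vnorm (flipCoord β y) ^ p = _
    rw [vnorm_flip]
    have hnum : (∏ j, (flipCoord β y) (q j)) = -∏ j, y (q j) := by
      have : ∀ j, (flipCoord β y) (q j) = if q j = β then (-1) * y (q j) else y (q j) := by
        intro j
        show (if q j = β then -(y (q j)) else y (q j)) = _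
        split_ifs <;> ring
      unfold cnt at hodd
      rw [Finset.prod_congr rfl (fun j _ => this j), Finset.prod_ite, Finset.prod_mul_distrib,
        Finset.prod_const, hodd.neg_one_pow]
      rw [← Finset.prod_filter_mul_prod_filter_not Finset.univ (fun j => q j = β) (fun j => y (q j))]
      ring
    rw [hnum, hF]
    ring_nf
  have h1 : ∫ y, F y ∂ stdGaussian d = ∫ y, F (flipCoord β y) ∂ stdGaussian d :=
    ((flipCoord_mp β).integral_comp' F).symm
  have h2 : ∫ y, F (flipCoord β y) ∂ stdGaussian d = -∫ y, F y ∂ stdGaussian d := by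
    simp_rw [key]
    exact integral_neg F
  have := h1.trans h2
  linarith

section Classify

variable {d : ℕ} {ι ι₁ ι₂ : Type*} [Fintype ι] [Fintype ι₁] [Fintype ι₂]

lemma cnt_eq_sum (q : ι → Fin d) (β : Fin d) :
    cnt q β = ∑ j, if q j = β then 1 else 0 := Finset.card_filter _ _

lemma cnt_sum_elim (g : ι₁ → Fin d) (a : ι₂ → Fin d) (β : Fin d) :
    cnt (Sum.elim g a) β = cnt g β + cnt a β := by
  rw [cnt_eq_sum, cnt_eq_sum, cnt_eq_sum, Fintype.sum_sum_type]
  simp only [Sum.elim_inl, Sum.elim_inr]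
  rfl

lemma cnt_option (a : ι → Fin d) (β0 β : Fin d) :
    cnt (fun o : Option ι => o.elim β0 a) β = (if β0 = β then 1 else 0) + cnt a β := by
  rw [cnt_eq_sum, cnt_eq_sum, Fintype.sum_option]
  simp only [Option.elim]
  rfl

lemma cnt_inj_le {a : ι → Fin d} (ha : Function.Injective a) (β : Fin d) : cnt a β ≤ 1 := by
  apply Finset.card_le_one.mpr
  intro x hx y hy
  exact ha ((Finset.mem_filter.mp hx).2.trans (Finset.mem_filter.mp hy).2.symm)

lemma cnt_inj_self {a : ι → Fin d} (ha : Function.Injective a) (i : ι) : cnt a (a i) = 1 := by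
  unfold cnt
  rw [Finset.card_eq_one]
  exact ⟨i, by ext j; simp [ha.eq_iff]⟩

lemma cnt_le_of_even {g : ι₁ → Fin d} {a : ι₂ → Fin d} (ha : Function.Injective a)
    (h : ∀ β, Even (cnt g β + cnt a β)) (β : Fin d) : cnt a β ≤ cnt g β := by
  have h1 := cnt_inj_le ha β
  interval_cases hc : cnt a β
  · exact Nat.zero_le _
  · have := h β
    rw [hc] at this
    rcases Nat.even_add_one.mp this with h2
    have : cnt g β ≠ 0 := by
      intro h0
      rw [h0] at h2
      exact h2 Even.zero
    omega

lemma card_le_of_even {g : ι₁ → Fin d} {a : ι₂ → Fin d} (ha : Function.Injective a)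
    (h : ∀ β, Even (cnt g β + cnt a β)) : Fintype.card ι₂ ≤ Fintype.card ι₁ := by
  rw [← sum_cnt a, ← sum_cnt g]
  exact Finset.sum_le_sum fun β _ => cnt_le_of_even ha h β

lemma cnt_eq_of_even {g : ι₁ → Fin d} {a : ι₂ → Fin d} (ha : Function.Injective a)
    (hcard : Fintype.card ι₁ = Fintype.card ι₂)
    (h : ∀ β, Even (cnt g β + cnt a β)) (β : Fin d) : cnt g β = cnt a β := by
  have hsum : ∑ β, cnt a β = ∑ β, cnt g β := by rw [sum_cnt, sum_cnt, hcard]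
  exact ((Finset.sum_eq_sum_iff_of_le (fun β _ => cnt_le_of_even ha h β)).mp hsum β
    (Finset.mem_univ β)).symm

lemma prod_eq_of_cnt_eq {q : ι₁ → Fin d} {a : ι₂ → Fin d}
    (h : ∀ β, cnt q β = cnt a β) (v : Fin d → ℝ) :
    ∏ j, v (q j) = ∏ i, v (a i) := by
  rw [prod_comp_eq, prod_comp_eq]
  exact Finset.prod_congr rfl fun β _ => by rw [h β]

end Classify

section Integrability

lemma one_add_sum_le {ι : Type*} (s : Finset ι) (a : ι → ℝ) (ha : ∀ i, 0 ≤ a i) :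
    1 + ∑ i ∈ s, a i ≤ ∏ i ∈ s, (1 + a i) := by
  classical
  induction s using Finset.induction_on with
  | empty => simp
  | @insert x s hx ih =>
    rw [Finset.sum_insert hx, Finset.prod_insert hx]
    have h0 : 0 ≤ ∑ i ∈ s, a i := Finset.sum_nonneg fun i _ => ha i
    nlinarith [ha x]

lemma integrable_poly_exp (m : ℕ) :
    Integrable (fun x : ℝ => x ^ m * Real.exp (-(1/2) * x^2)) volume := by
  have h := integrable_rpow_mul_exp_neg_mul_sq (b := 1/2) (by norm_num) (s := m)
    (by have := Nat.cast_nonneg (α := ℝ) m; linarith)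
  simp_rw [Real.rpow_natCast] at h
  exact h

lemma integrable_onePlusSq_exp (K : ℕ) :
    Integrable (fun x : ℝ => (1 + x^2)^K * Real.exp (-(1/2) * x^2)) volume := by
  have heq : (fun x : ℝ => (1 + x^2)^K * Real.exp (-(1/2) * x^2))
      = fun x => ∑ k ∈ Finset.range (K+1),
        (K.choose k : ℝ) * (x ^ (2*(K-k)) * Real.exp (-(1/2) * x^2)) := by
    funext x
    rw [add_pow, Finset.sum_mul]
    refine Finset.sum_congr rfl fun k _ => ?_
    rw [one_pow, ← pow_mul]
    ring
  rw [heq]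
  exact integrable_finset_sum _ fun k _ => (integrable_poly_exp (2*(K-k))).const_mul _

lemma integrable_poly_gaussian (K : ℕ) :
    Integrable (fun t : ℝ => (1 + t^2)^K) (ProbabilityTheory.gaussianReal 0 1) := by
  rw [ProbabilityTheory.gaussianReal_of_var_ne_zero 0 one_ne_zero]
  rw [integrable_withDensity_iff (ProbabilityTheory.measurable_gaussianPDF 0 1)
    (ae_of_all _ fun x => ENNReal.ofReal_lt_top)]
  have hpt : ∀ x : ℝ, (ProbabilityTheory.gaussianPDF 0 1 x).toReal
      = (Real.sqrt (2 * π))⁻¹ * Real.exp (-(1/2) * x^2) := by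
    intro x
    rw [ProbabilityTheory.gaussianPDF, ENNReal.toReal_ofReal
      (ProbabilityTheory.gaussianPDFReal_nonneg _ _ _), ProbabilityTheory.gaussianPDFReal]
    norm_num
    exact Or.inl (by ring)
  simp_rw [hpt]
  have heq : (fun x : ℝ => (1 + x^2)^K * ((Real.sqrt (2 * π))⁻¹ * Real.exp (-(1/2) * x^2)))
      = fun x => (Real.sqrt (2 * π))⁻¹ * ((1 + x^2)^K * Real.exp (-(1/2) * x^2)) := by
    funext x; ring
  rw [heq]
  exact (integrable_onePlusSq_exp K).const_mul _

lemma integrable_pi_prod (μ : Measure ℝ) [IsProbabilityMeasure μ] {f : ℝ → ℝ}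
    (hf : Integrable f μ) :
    ∀ n, Integrable (fun x : Fin n → ℝ => ∏ i, f (x i)) (Measure.pi fun _ => μ) := by
  intro n
  induction n with
  | zero =>
    simp only [Finset.univ_eq_empty, Finset.prod_empty]
    exact integrable_const 1
  | succ n ih =>
    have h := (measurePreserving_piFinSuccAbove (fun _ : Fin (n+1) => μ) 0).symm
    rw [← h.integrable_comp_emb (MeasurableEquiv.measurableEmbedding _)]
    simp_rw [MeasurableEquiv.piFinSuccAbove_symm_apply, Fin.insertNthEquiv,
      Fin.prod_univ_succ, Fin.insertNth_zero]
    simp only [Fin.zero_succAbove, cast_eq, Function.comp_def, Fin.cons_zero, Fin.cons_succ]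
    exact Integrable.mul_prod hf ih

lemma measurable_vnorm {d : ℕ} : Measurable (vnorm (d := d)) := by
  apply Measurable.comp Real.continuous_sqrt.measurable
  exact Finset.measurable_sum _ fun i _ => (measurable_pi_apply i).pow_const 2

lemma vnorm_nonneg {d : ℕ} (y : Fin d → ℝ) : 0 ≤ vnorm y := Real.sqrt_nonneg _

lemma vnorm_coord_zero {d : ℕ} {y : Fin d → ℝ} (h : vnorm y = 0) (i : Fin d) : y i = 0 := by
  have hs : ∑ j, y j ^ 2 = 0 := by
    have := Real.sqrt_eq_zero'.mp h
    have h2 : 0 ≤ ∑ j, y j ^ 2 := Finset.sum_nonneg fun j _ => sq_nonneg _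
    rcases this with h1
    linarith
  have := (Finset.sum_eq_zero_iff_of_nonneg (fun j _ => sq_nonneg (y j))).mp hs i
    (Finset.mem_univ i)
  exact pow_eq_zero_iff (n := 2) (by norm_num) |>.mp this

lemma abs_coord_le_vnorm {d : ℕ} (y : Fin d → ℝ) (i : Fin d) : |y i| ≤ vnorm y := by
  rw [← Real.sqrt_sq_eq_abs]
  exact Real.sqrt_le_sqrt (Finset.single_le_sum (fun j _ => sq_nonneg (y j)) (Finset.mem_univ i))

lemma integrable_main {d : ℕ} {ι : Type*} [Fintype ι] [Nonempty ι] (q : ι → Fin d) (p : ℕ)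
    (hp : p ≤ Fintype.card ι) :
    Integrable (fun y : Fin d → ℝ => (∏ j, y (q j)) / vnorm y ^ p) (stdGaussian d) := by
  set K := Fintype.card ι with hK
  have hG : Integrable (fun y : Fin d → ℝ => ∏ i, (1 + (y i)^2)^K) (stdGaussian d) := by
    have := integrable_pi_prod (ProbabilityTheory.gaussianReal 0 1)
      (integrable_poly_gaussian K) d
    exact this
  refine hG.mono' ?_ ?_
  · apply Measurable.aestronglyMeasurable
    exact (Finset.measurable_prod _ fun j _ => measurable_pi_apply (q j)).div
      (measurable_vnorm.pow_const p)
  · refine ae_of_all _ fun y => ?_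
    have hGpos : (1:ℝ) ≤ ∏ i, (1 + (y i)^2)^K := by
      have h0 : ∏ _i : Fin d, (1:ℝ) ≤ ∏ i, (1 + (y i)^2)^K := by
        refine Finset.prod_le_prod (fun i _ => zero_le_one) (fun i _ => ?_)
        calc (1:ℝ) = 1 ^ K := (one_pow K).symm
          _ ≤ (1 + (y i)^2)^K := by
            apply pow_le_pow_left₀ zero_le_one
            nlinarith [sq_nonneg (y i)]
      simpa using h0
    rw [Real.norm_eq_abs, abs_div, abs_pow, abs_of_nonneg (vnorm_nonneg y)]
    rcases eq_or_lt_of_le (vnorm_nonneg y) with hv | hv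
    · have : y (q (Classical.arbitrary ι)) = 0 := vnorm_coord_zero hv.symm _
      rw [show |∏ j, y (q j)| = 0 by
        rw [abs_eq_zero]
        exact Finset.prod_eq_zero (Finset.mem_univ (Classical.arbitrary ι)) this]
      rw [zero_div]
      linarith
    · set v := vnorm y with hvdef
      have h1 : |∏ j, y (q j)| ≤ v ^ K := by
        rw [Finset.abs_prod]
        calc ∏ j, |y (q j)| ≤ ∏ _j : ι, v :=
              Finset.prod_le_prod (fun j _ => abs_nonneg _)
                (fun j _ => abs_coord_le_vnorm y (q j))
          _ = v ^ K := by rw [Finset.prod_const, Finset.card_univ]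
      have h2 : |∏ j, y (q j)| / v ^ p ≤ v ^ (K - p) := by
        rw [div_le_iff₀ (by positivity)]
        calc |∏ j, y (q j)| ≤ v ^ K := h1
          _ = v ^ (K - p) * v ^ p := by rw [← pow_add, Nat.sub_add_cancel hp]
      have h3 : v ^ (K - p) ≤ (1 + v^2) ^ K := by
        calc v ^ (K - p) ≤ (1 + v^2) ^ (K - p) := by
              apply pow_le_pow_left₀ (vnorm_nonneg y)
              nlinarith
          _ ≤ (1 + v^2) ^ K := by
              apply pow_le_pow_right₀ (by nlinarith) (Nat.sub_le K p)
      have h4 : (1 + v^2) ^ K ≤ ∏ i, (1 + (y i)^2)^K := by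
        rw [Finset.prod_pow]
        apply pow_le_pow_left₀ (by nlinarith)
        have hv2 : v ^ 2 = ∑ i, y i ^ 2 := Real.sq_sqrt (Finset.sum_nonneg fun j _ => sq_nonneg _)
        rw [hv2]
        exact one_add_sum_le _ _ fun i => sq_nonneg _
      linarith
end Integrability

lemma dot_pow {d : ℕ} (x y : Fin d → ℝ) (K : ℕ) :
    dot x y ^ K = ∑ g : Fin K → Fin d, (∏ j, x (g j)) * (∏ j, y (g j)) := by
  unfold dot
  have h1 : (∑ i, x i * y i) ^ K = ∏ _j : Fin K, (∑ i, x i * y i) := by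
    rw [Finset.prod_const, Finset.card_univ, Fintype.card_fin]
  rw [h1, Finset.prod_univ_sum, Fintype.piFinset_univ]
  exact Finset.sum_congr rfl fun g _ => by rw [Finset.prod_mul_distrib]

section MainLemmas

variable {d n : ℕ} {α : Fin (2*n+2) → Fin d}

lemma vanish_T0 (hαinj : Function.Injective α) (p : ℕ) :
    ∫ y, (∏ i, y (α i)) / vnorm y ^ p ∂ stdGaussian d = 0 := by
  have i0 : Fin (2*n+2) := ⟨0, by omega⟩
  apply integral_vanish α p (α i0)
  rw [cnt_inj_self hαinj]
  exact odd_one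

lemma vanish_T1 (α : Fin (2*n+2) → Fin d) (β : Fin d) (p : ℕ) :
    ∫ y, (y β * ∏ i, y (α i)) / vnorm y ^ p ∂ stdGaussian d = 0 := by
  have hrw : ∀ y : Fin d → ℝ,
      y β * ∏ i, y (α i) = ∏ o : Option (Fin (2*n+2)), y (Option.elim o β α) := by
    intro y; rw [Fintype.prod_option]; rfl
  simp_rw [hrw]
  obtain ⟨β', hβ'⟩ := exists_odd_cnt (fun o : Option (Fin (2*n+2)) => Option.elim o β α)
    (by rw [Fintype.card_option, Fintype.card_fin]; exact ⟨n+1, by ring⟩)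
  exact integral_vanish _ p β' hβ'

lemma vanish_T2 (α : Fin (2*n+2) → Fin d) {l : ℕ} (g : Fin (2*l+2) → Fin d) (β : Fin d)
    (hodd : Odd (cnt (Sum.elim g α) β)) (p : ℕ) :
    ∫ y, ((∏ j, y (g j)) * ∏ i, y (α i)) / vnorm y ^ p ∂ stdGaussian d = 0 := by
  have hrw : ∀ y : Fin d → ℝ, (∏ j, y (g j)) * ∏ i, y (α i)
      = ∏ j : Fin (2*l+2) ⊕ Fin (2*n+2), y (Sum.elim g α j) := fun y =>
    (Fintype.prod_sum_type (fun j : Fin (2*l+2) ⊕ Fin (2*n+2) => y (Sum.elim g α j))).symm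
  simp_rw [hrw]
  exact integral_vanish _ p β hodd

lemma int_T0 (α : Fin (2*n+2) → Fin d) {p : ℕ} (hp : p ≤ 2*n+2) :
    Integrable (fun y => (∏ i, y (α i)) / vnorm y ^ p) (stdGaussian d) := by
  haveI : Nonempty (Fin (2*n+2)) := ⟨⟨0, by omega⟩⟩
  exact integrable_main α p (by simpa using hp)

lemma int_T1 (α : Fin (2*n+2) → Fin d) (β : Fin d) {p : ℕ} (hp : p ≤ 2*n+3) :
    Integrable (fun y => (y β * ∏ i, y (α i)) / vnorm y ^ p) (stdGaussian d) := by
  have hrw : ∀ y : Fin d → ℝ,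
      y β * ∏ i, y (α i) = ∏ o : Option (Fin (2*n+2)), y (Option.elim o β α) := by
    intro y; rw [Fintype.prod_option]; rfl
  simp_rw [hrw]
  haveI : Nonempty (Option (Fin (2*n+2))) := ⟨none⟩
  exact integrable_main (fun o : Option (Fin (2*n+2)) => Option.elim o β α) p
    (by rw [Fintype.card_option, Fintype.card_fin]; omega)

lemma int_T2 (α : Fin (2*n+2) → Fin d) {l : ℕ} (g : Fin (2*l+2) → Fin d) {p : ℕ}
    (hp : p ≤ 2*l+2 + (2*n+2)) :
    Integrable (fun y => ((∏ j, y (g j)) * ∏ i, y (α i)) / vnorm y ^ p) (stdGaussian d) := by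
  have hrw : ∀ y : Fin d → ℝ, (∏ j, y (g j)) * ∏ i, y (α i)
      = ∏ j : Fin (2*l+2) ⊕ Fin (2*n+2), y (Sum.elim g α j) := fun y =>
    (Fintype.prod_sum_type (fun j : Fin (2*l+2) ⊕ Fin (2*n+2) => y (Sum.elim g α j))).symm
  simp_rw [hrw]
  haveI : Nonempty (Fin (2*l+2) ⊕ Fin (2*n+2)) := ⟨Sum.inl ⟨0, by omega⟩⟩
  exact integrable_main (Sum.elim g α) p
    (by rw [Fintype.card_sum, Fintype.card_fin, Fintype.card_fin]; omega)

lemma classify (hαinj : Function.Injective α) {g : Fin (2*n+2) → Fin d}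
    (h : ∀ β, Even (cnt (Sum.elim g α) β)) (v : Fin d → ℝ) :
    ∏ j, v (g j) = ∏ i, v (α i) := by
  have h' : ∀ β, Even (cnt g β + cnt α β) := by
    intro β; have := h β; rwa [cnt_sum_elim] at this
  exact prod_eq_of_cnt_eq (cnt_eq_of_even hαinj rfl h') v

lemma nosurvive (hαinj : Function.Injective α) {l : ℕ} (hl : l < n)
    (g : Fin (2*l+2) → Fin d) : ∃ β, Odd (cnt (Sum.elim g α) β) := by
  by_contra h
  push_neg at h
  simp only [Nat.not_odd_iff_even] at h
  have h' : ∀ β, Even (cnt g β + cnt α β) := by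
    intro β; have := h β; rwa [cnt_sum_elim] at this
  have := card_le_of_even hαinj h'
  rw [Fintype.card_fin, Fintype.card_fin] at this
  omega

end MainLemmas

lemma third_sum {d n : ℕ} {α : Fin (2*n+2) → Fin d} (hαinj : Function.Injective α)
    (x : Fin d → ℝ) :
    ∫ y, (∑ l ∈ Finset.range (n+1), ∑ g : Fin (2*l+2) → Fin d,
        ((1/(2*π)) * ((Nat.choose (2*l) l : ℝ) / (2^(2*l) * (2*l+1) * (2*l+2))
            * (∏ j, x (g j)) / vnorm x ^ (2*l+1)))
          * (((∏ j, y (g j)) * ∏ i, y (α i)) / vnorm y ^ (2*l+1+(2*n+1)))) ∂ stdGaussian d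
    = (((Finset.univ.filter
          (fun g : Fin (2*n+2) → Fin d => ∀ β, Even (cnt (Sum.elim g α) β))).card : ℝ))
        * (((1/(2*π)) * ((Nat.choose (2*n) n : ℝ) / (2^(2*n) * (2*n+1) * (2*n+2))
            * (∏ i, x (α i)) / vnorm x ^ (2*n+1)))
        * (∫ y, ((∏ i, y (α i)) * ∏ i, y (α i)) / vnorm y ^ (2*n+1+(2*n+1)) ∂ stdGaussian d)) := by
  classical
  rw [integral_finset_sum _ (fun l _ => integrable_finset_sum _
    (fun g _ => (int_T2 α g (by omega)).const_mul _))]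
  have hstep : ∀ l ∈ Finset.range (n+1),
      (∫ y, (∑ g : Fin (2*l+2) → Fin d,
        ((1/(2*π)) * ((Nat.choose (2*l) l : ℝ) / (2^(2*l) * (2*l+1) * (2*l+2))
            * (∏ j, x (g j)) / vnorm x ^ (2*l+1)))
          * (((∏ j, y (g j)) * ∏ i, y (α i)) / vnorm y ^ (2*l+1+(2*n+1)))) ∂ stdGaussian d)
      = ∑ g : Fin (2*l+2) → Fin d,
        ((1/(2*π)) * ((Nat.choose (2*l) l : ℝ) / (2^(2*l) * (2*l+1) * (2*l+2))
            * (∏ j, x (g j)) / vnorm x ^ (2*l+1)))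
          * ∫ y, (((∏ j, y (g j)) * ∏ i, y (α i)) / vnorm y ^ (2*l+1+(2*n+1))) ∂ stdGaussian d := by
    intro l _
    rw [integral_finset_sum _ (fun g _ => (int_T2 α g (by omega)).const_mul _)]
    exact Finset.sum_congr rfl fun g _ => integral_const_mul _ _
  rw [Finset.sum_congr rfl hstep]
  rw [Finset.sum_eq_single_of_mem n (Finset.self_mem_range_succ n)]
  · rw [← Finset.sum_filter_add_sum_filter_not Finset.univ
      (fun g : Fin (2*n+2) → Fin d => ∀ β, Even (cnt (Sum.elim g α) β))]
    have hz : ∑ g ∈ Finset.univ.filter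
        (fun g : Fin (2*n+2) → Fin d => ¬ ∀ β, Even (cnt (Sum.elim g α) β)),
        ((1/(2*π)) * ((Nat.choose (2*n) n : ℝ) / (2^(2*n) * (2*n+1) * (2*n+2))
            * (∏ j, x (g j)) / vnorm x ^ (2*n+1)))
          * ∫ y, (((∏ j, y (g j)) * ∏ i, y (α i)) / vnorm y ^ (2*n+1+(2*n+1))) ∂ stdGaussian d
        = 0 := by
      refine Finset.sum_eq_zero fun g hg => ?_
      obtain ⟨β, hβ⟩ : ∃ β, Odd (cnt (Sum.elim g α) β) := by
        have := (Finset.mem_filter.mp hg).2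
        obtain ⟨β, hβ⟩ := not_forall.mp this
        exact ⟨β, Nat.not_even_iff_odd.mp hβ⟩
      rw [vanish_T2 α g β hβ, mul_zero]
    rw [hz, add_zero]
    have hterm : ∀ g ∈ Finset.univ.filter
        (fun g : Fin (2*n+2) → Fin d => ∀ β, Even (cnt (Sum.elim g α) β)),
        ((1/(2*π)) * ((Nat.choose (2*n) n : ℝ) / (2^(2*n) * (2*n+1) * (2*n+2))
            * (∏ j, x (g j)) / vnorm x ^ (2*n+1)))
          * ∫ y, (((∏ j, y (g j)) * ∏ i, y (α i)) / vnorm y ^ (2*n+1+(2*n+1))) ∂ stdGaussian d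
        = ((1/(2*π)) * ((Nat.choose (2*n) n : ℝ) / (2^(2*n) * (2*n+1) * (2*n+2))
            * (∏ i, x (α i)) / vnorm x ^ (2*n+1)))
          * ∫ y, ((∏ i, y (α i)) * ∏ i, y (α i)) / vnorm y ^ (2*n+1+(2*n+1)) ∂ stdGaussian d := by
      intro g hg
      have hP := (Finset.mem_filter.mp hg).2
      have hxprod := classify hαinj hP x
      have hyfun : (fun y : Fin d → ℝ =>
          ((∏ j, y (g j)) * ∏ i, y (α i)) / vnorm y ^ (2*n+1+(2*n+1)))
          = fun y => ((∏ i, y (α i)) * ∏ i, y (α i)) / vnorm y ^ (2*n+1+(2*n+1)) := by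
        funext y
        rw [classify hαinj hP y]
      rw [hxprod, hyfun]
    rw [Finset.sum_congr rfl hterm, Finset.sum_const, nsmul_eq_mul]
  · intro l hl hlne
    refine Finset.sum_eq_zero fun g _ => ?_
    obtain ⟨β, hβ⟩ := nosurvive hαinj
      (show l < n by have := Finset.mem_range.mp hl; omega) g
    rw [vanish_T2 α g β hβ, mul_zero]

theorem trunc_kernel_eigenfunction (d n : ℕ) (hd : 2 ≤ d) (hn : n ≤ (d - 2) / 2)
    (α : Fin (2 * n + 2) → Fin d) (hα : StrictMono α) :
    ∃ lam : ℝ, ∀ x : Fin d → ℝ, x ≠ 0 →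
      ∫ y, kTrunc d n x y * ((∏ i, y (α i)) / vnorm y ^ (2 * n + 1)) ∂ stdGaussian d
        = lam * ((∏ i, x (α i)) / vnorm x ^ (2 * n + 1)) := by
  classical
  have hαinj : Function.Injective α := hα.injective
  refine ⟨(((Finset.univ.filter
        (fun g : Fin (2*n+2) → Fin d => ∀ β, Even (cnt (Sum.elim g α) β))).card : ℝ))
      * ((1/(2*π)) * ((Nat.choose (2*n) n : ℝ) / (2^(2*n) * (2*n+1) * (2*n+2))))
      * (∫ y, ((∏ i, y (α i)) * ∏ i, y (α i)) / vnorm y ^ (2*n+1+(2*n+1)) ∂ stdGaussian d),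
    fun x hx => ?_⟩
  have hpt : ∀ y : Fin d → ℝ,
      kTrunc d n x y * ((∏ i, y (α i)) / vnorm y ^ (2 * n + 1))
      = (vnorm x/(2*π)) * ((∏ i, y (α i)) / vnorm y ^ (2*n))
        + ((∑ β, (x β/4) * ((y β * ∏ i, y (α i)) / vnorm y ^ (2*n+1)))
        + ∑ l ∈ Finset.range (n+1), ∑ g : Fin (2*l+2) → Fin d,
            ((1/(2*π)) * ((Nat.choose (2*l) l : ℝ) / (2^(2*l) * (2*l+1) * (2*l+2))
                * (∏ j, x (g j)) / vnorm x ^ (2*l+1)))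
              * (((∏ j, y (g j)) * ∏ i, y (α i)) / vnorm y ^ (2*l+1+(2*n+1)))) := by
    intro y
    have hterm : ∀ l, ntkTerm x y l * ((∏ i, y (α i)) / vnorm y ^ (2*n+1))
        = ∑ g : Fin (2*l+2) → Fin d,
          (((Nat.choose (2*l) l : ℝ) / (2^(2*l) * (2*l+1) * (2*l+2))
              * (∏ j, x (g j)) / vnorm x ^ (2*l+1)))
            * (((∏ j, y (g j)) * ∏ i, y (α i)) / vnorm y ^ (2*l+1+(2*n+1))) := by
      intro l
      show (Nat.choose (2*l) l : ℝ) * dot x y ^ (2 * l + 2) /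
          (2 ^ (2 * l) * (2 * l + 1) * (2 * l + 2) * (vnorm x * vnorm y) ^ (2 * l + 1))
          * ((∏ i, y (α i)) / vnorm y ^ (2*n+1)) = _
      generalize (2 ^ (2 * l) * (2 * l + 1) * (2 * l + 2) : ℝ) = Dl
      rw [dot_pow x y (2*l+2), Finset.mul_sum, Finset.sum_div, Finset.sum_mul]
      refine Finset.sum_congr rfl fun g _ => ?_
      rw [mul_pow]
      ring
    rw [kTrunc, add_mul, add_mul, mul_assoc, Finset.sum_mul, add_assoc]
    congr 1
    · rcases eq_or_ne (vnorm y) 0 with hv | hv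
      · have hzero : (∏ i, y (α i)) = 0 :=
          Finset.prod_eq_zero (Finset.mem_univ (⟨0, by omega⟩ : Fin (2*n+2)))
            (vnorm_coord_zero hv _)
        rw [hv, hzero]
        simp
      · rw [show (2*n+1) = 2*n + 1 from rfl, pow_succ]
        field_simp
    congr 1
    · show dot x y / 4 * ((∏ i, y (α i)) / vnorm y ^ (2*n+1)) = _
      rw [dot, Finset.sum_div, Finset.sum_mul]
      exact Finset.sum_congr rfl fun β _ => by ring
    · rw [Finset.mul_sum]
      refine Finset.sum_congr rfl fun l _ => ?_
      rw [hterm l, Finset.mul_sum]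
      refine Finset.sum_congr rfl fun g _ => ?_
      ring
  rw [integral_congr_ae (ae_of_all _ hpt)]
  have hI1 : Integrable (fun y : Fin d → ℝ =>
      (vnorm x/(2*π)) * ((∏ i, y (α i)) / vnorm y ^ (2*n))) (stdGaussian d) :=
    (int_T0 α (by omega)).const_mul _
  have hI2 : Integrable (fun y : Fin d → ℝ =>
      ∑ β, (x β/4) * ((y β * ∏ i, y (α i)) / vnorm y ^ (2*n+1))) (stdGaussian d) :=
    integrable_finset_sum _ fun β _ => (int_T1 α β (by omega)).const_mul _
  have hI3 : Integrable (fun y : Fin d → ℝ =>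
      ∑ l ∈ Finset.range (n+1), ∑ g : Fin (2*l+2) → Fin d,
        ((1/(2*π)) * ((Nat.choose (2*l) l : ℝ) / (2^(2*l) * (2*l+1) * (2*l+2))
            * (∏ j, x (g j)) / vnorm x ^ (2*l+1)))
          * (((∏ j, y (g j)) * ∏ i, y (α i)) / vnorm y ^ (2*l+1+(2*n+1)))) (stdGaussian d) :=
    integrable_finset_sum _ fun l _ => integrable_finset_sum _
      fun g _ => (int_T2 α g (by omega)).const_mul _
  have hI23 : Integrable (fun y : Fin d → ℝ =>
      (∑ β, (x β/4) * ((y β * ∏ i, y (α i)) / vnorm y ^ (2*n+1)))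
      + ∑ l ∈ Finset.range (n+1), ∑ g : Fin (2*l+2) → Fin d,
        ((1/(2*π)) * ((Nat.choose (2*l) l : ℝ) / (2^(2*l) * (2*l+1) * (2*l+2))
            * (∏ j, x (g j)) / vnorm x ^ (2*l+1)))
          * (((∏ j, y (g j)) * ∏ i, y (α i)) / vnorm y ^ (2*l+1+(2*n+1)))) (stdGaussian d) :=
    hI2.add hI3
  rw [integral_add hI1 hI23, integral_add hI2 hI3]
  rw [integral_const_mul, vanish_T0 hαinj, mul_zero]
  rw [integral_finset_sum _ (fun β _ => (int_T1 α β (by omega)).const_mul _)]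
  have hz2 : ∑ β, ∫ y, (x β/4) * ((y β * ∏ i, y (α i)) / vnorm y ^ (2*n+1)) ∂ stdGaussian d
      = 0 :=
    Finset.sum_eq_zero fun β _ => by rw [integral_const_mul, vanish_T1 α β, mul_zero]
  rw [hz2, third_sum hαinj x]
  ring
end

section
/- Let d ≥ 1 and define, for nonzero x, y ∈ ℝ^d, r(x,y) = (1/(2π))·Σ_{n=1}^∞ C(2n,n)·⟨x,y⟩^{2n+2}/(2^{2n}(2n+1)(2n+2)(|x||y|)^{2n+1}). Then r is a positive-semidefinite kernel: for every N ≥ 1, every choice of nonzero points x_1,…,x_N ∈ ℝ^d, and every c ∈ ℝ^N, Σ_{i=1}^N Σ_{j=1}^N c_i c_j r(x_i, x_j) ≥ 0. -/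
open MeasureTheory Real

/-- Remainder kernel `r(x,y)`. -/
noncomputable def rker {d : ℕ} (x y : Fin d → ℝ) : ℝ :=
  (1 / (2 * π)) * ∑' n : ℕ, ntkTerm x y (n + 1)

lemma vnorm_pos {d : ℕ} {x : Fin d → ℝ} (hx : x ≠ 0) : 0 < vnorm x := by
  apply Real.sqrt_pos.2
  have h : ∃ i, x i ≠ 0 := by
    by_contra h; push_neg at h; exact hx (funext h)
  obtain ⟨i, hi⟩ := h
  have h1 : (0:ℝ) < x i ^ 2 := by positivity
  exact lt_of_lt_of_le h1 (Finset.single_le_sum (f := fun j => x j ^ 2)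
    (fun j _ => by positivity) (Finset.mem_univ i))

lemma abs_dot_le {d : ℕ} (x y : Fin d → ℝ) : |dot x y| ≤ vnorm x * vnorm y := by
  have h := Finset.sum_mul_sq_le_sq_mul_sq Finset.univ x y
  have h2 : dot x y ^ 2 ≤ (vnorm x * vnorm y) ^ 2 := by
    calc dot x y ^ 2 ≤ (∑ i, x i ^ 2) * (∑ i, y i ^ 2) := h
    _ = (vnorm x * vnorm y) ^ 2 := by
        rw [mul_pow, vnorm, vnorm,
          Real.sq_sqrt (show (0:ℝ) ≤ ∑ i, x i ^ 2 by positivity),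
          Real.sq_sqrt (show (0:ℝ) ≤ ∑ i, y i ^ 2 by positivity)]
  exact abs_le_of_sq_le_sq h2 (mul_nonneg (Real.sqrt_nonneg _) (Real.sqrt_nonneg _))

/-- The kernel `(x,y) ↦ (dot x y)^m` is positive semidefinite. -/
lemma dot_pow_psd {d N : ℕ} (x : Fin N → Fin d → ℝ) (b : Fin N → ℝ) (m : ℕ) :
    0 ≤ ∑ i, ∑ j, b i * b j * dot (x i) (x j) ^ m := by
  have key : ∀ i j, dot (x i) (x j) ^ m
      = ∑ k : Fin m → Fin d, (∏ t, x i (k t)) * (∏ t, x j (k t)) := by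
    intro i j
    have h1 : dot (x i) (x j) ^ m = ∏ _t : Fin m, ∑ a, x i a * x j a := by
      simp [dot, Finset.prod_const]
    rw [h1, Finset.prod_univ_sum (fun _ => Finset.univ) (fun _ a => x i a * x j a)]
    exact Finset.sum_congr rfl fun k _ => Finset.prod_mul_distrib
  have main : ∑ k : Fin m → Fin d, (∑ i, b i * ∏ t, x i (k t)) ^ 2
      = ∑ i, ∑ j, b i * b j * dot (x i) (x j) ^ m := by
    simp_rw [sq, Finset.sum_mul_sum, key, Finset.mul_sum]
    conv_lhs => rw [Finset.sum_comm]
    refine Finset.sum_congr rfl fun i _ => ?_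
    conv_lhs => rw [Finset.sum_comm]
    exact Finset.sum_congr rfl fun j _ => Finset.sum_congr rfl fun k _ => by ring
  rw [← main]
  positivity

/-- Each term of the series is a positive semidefinite kernel. -/
lemma term_psd {d N : ℕ} (x : Fin N → Fin d → ℝ) (hx : ∀ i, x i ≠ 0)
    (c : Fin N → ℝ) (n : ℕ) :
    0 ≤ ∑ i, ∑ j, c i * c j * ntkTerm (x i) (x j) n := by
  set A : ℝ := (Nat.choose (2*n) n : ℝ) / (2 ^ (2*n) * (2*n+1) * (2*n+2)) with hA
  set b : Fin N → ℝ := fun i => c i / vnorm (x i) ^ (2*n+1) with hb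
  have hrw : ∀ i j, c i * c j * ntkTerm (x i) (x j) n
      = A * (b i * b j * dot (x i) (x j) ^ (2*n+2)) := by
    intro i j
    have hi := vnorm_pos (hx i); have hj := vnorm_pos (hx j)
    have h1 : (2:ℝ) ^ (2*n) ≠ 0 := by positivity
    have h2 : (2*(n:ℝ)+1) ≠ 0 := by positivity
    have h3 : (2*(n:ℝ)+2) ≠ 0 := by positivity
    simp only [ntkTerm, hA, hb]
    rw [mul_pow]
    push_cast
    field_simp
  simp_rw [hrw, ← Finset.mul_sum]
  have hA0 : 0 ≤ A := by positivity
  exact mul_nonneg hA0 (dot_pow_psd x b _)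

lemma ntkTerm_nonneg {d : ℕ} {x y : Fin d → ℝ} (hx : x ≠ 0) (hy : y ≠ 0) (n : ℕ) :
    0 ≤ ntkTerm x y n := by
  have hx' := vnorm_pos hx; have hy' := vnorm_pos hy
  have heven : Even (2*n+2) := ⟨n+1, by ring⟩
  have h1 : 0 ≤ dot x y ^ (2*n+2) := heven.pow_nonneg _
  unfold ntkTerm
  positivity

lemma ntkTerm_le {d : ℕ} {x y : Fin d → ℝ} (hx : x ≠ 0) (hy : y ≠ 0) (n : ℕ) :
    ntkTerm x y n ≤ (vnorm x * vnorm y) / ((n:ℝ)+1)^2 := by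
  have hx' := vnorm_pos hx; have hy' := vnorm_pos hy
  set a : ℝ := vnorm x * vnorm y with ha
  have hap : 0 < a := mul_pos hx' hy'
  have heven : Even (2*n+2) := ⟨n+1, by ring⟩
  have htp : 0 ≤ dot x y ^ (2*n+2) := heven.pow_nonneg _
  have hC : ((2*n).choose n : ℝ) ≤ 2 ^ (2*n) := by
    have h2 : (2*n).choose n ≤ (2*n+1).choose n := Nat.choose_le_choose n (Nat.le_succ _)
    have h3 := Nat.choose_middle_le_pow n
    calc ((2*n).choose n : ℝ) ≤ ((4:ℕ) ^ n : ℕ) := by exact_mod_cast h2.trans h3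
    _ = 2 ^ (2*n) := by rw [pow_mul]; norm_num
  have ht : dot x y ^ (2*n+2) ≤ a ^ (2*n+2) := by
    calc dot x y ^ (2*n+2) ≤ |dot x y ^ (2*n+2)| := le_abs_self _
    _ = |dot x y| ^ (2*n+2) := abs_pow _ _
    _ ≤ a ^ (2*n+2) := pow_le_pow_left₀ (abs_nonneg _) (abs_dot_le x y) _
  have hsq : ((n:ℝ)+1)^2 ≤ (2*(n:ℝ)+1)*(2*(n:ℝ)+2) := by nlinarith [sq_nonneg (n:ℝ), Nat.cast_nonneg (α := ℝ) n]
  have hD : (0:ℝ) < 2 ^ (2*n) * (2*(n:ℝ)+1) * (2*(n:ℝ)+2) * (vnorm x * vnorm y) ^ (2*n+1) := by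
    positivity
  have key : ((2*n).choose n : ℝ) * dot x y ^ (2*n+2) * ((n:ℝ)+1)^2
      ≤ 2 ^ (2*n) * a ^ (2*n+2) * ((2*(n:ℝ)+1)*(2*(n:ℝ)+2)) := by
    apply mul_le_mul _ hsq (by positivity) (by positivity)
    exact mul_le_mul hC ht htp (by positivity)
  unfold ntkTerm
  push_cast
  rw [div_le_div_iff₀ hD (by positivity)]
  calc ((2*n).choose n : ℝ) * dot x y ^ (2*n+2) * ((n:ℝ)+1)^2
      ≤ 2 ^ (2*n) * a ^ (2*n+2) * ((2*(n:ℝ)+1)*(2*(n:ℝ)+2)) := key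
    _ = vnorm x * vnorm y * (2 ^ (2*n) * (2*(n:ℝ)+1) * (2*(n:ℝ)+2) * (vnorm x * vnorm y) ^ (2*n+1)) := by
        rw [ha]; ring

lemma ntkTerm_summable {d : ℕ} {x y : Fin d → ℝ} (hx : x ≠ 0) (hy : y ≠ 0) :
    Summable (fun n : ℕ => ntkTerm x y (n + 1)) := by
  have hx' := vnorm_pos hx; have hy' := vnorm_pos hy
  have hs : Summable (fun n : ℕ => (vnorm x * vnorm y) / ((n:ℝ)+1)^2) := by
    apply Summable.mul_left
    have h0 : Summable (fun n : ℕ => 1 / (n:ℝ) ^ 2) :=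
      summable_one_div_nat_pow.mpr one_lt_two
    have h1 := (summable_nat_add_iff 1).mpr h0
    apply h1.congr
    intro n
    push_cast
    rw [one_div, inv_eq_one_div]
  apply Summable.of_nonneg_of_le (fun n => ntkTerm_nonneg hx hy (n+1))
    (fun n => ?_) hs
  calc ntkTerm x y (n+1) ≤ (vnorm x * vnorm y) / (((n+1:ℕ):ℝ)+1)^2 :=
        ntkTerm_le hx hy (n+1)
    _ ≤ (vnorm x * vnorm y) / ((n:ℝ)+1)^2 := by
        apply div_le_div_of_nonneg_left (by positivity) (by positivity)
        push_cast
        nlinarith [Nat.cast_nonneg (α := ℝ) n]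

theorem rker_posSemidef (d : ℕ) (hd : 1 ≤ d) (N : ℕ) (hN : 1 ≤ N)
    (x : Fin N → Fin d → ℝ) (hx : ∀ i, x i ≠ 0) (c : Fin N → ℝ) :
    0 ≤ ∑ i, ∑ j, c i * c j * rker (x i) (x j) := by
  have hπ : (0:ℝ) ≤ 1 / (2 * π) := by positivity
  have step : ∀ i j : Fin N, c i * c j * rker (x i) (x j)
      = (1 / (2 * π)) * ∑' n : ℕ, (c i * c j * ntkTerm (x i) (x j) (n + 1)) := by
    intro i j
    rw [rker, tsum_mul_left]
    ring
  simp_rw [step, ← Finset.mul_sum]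
  apply mul_nonneg hπ
  have hsum : ∀ i j : Fin N, Summable (fun n : ℕ => c i * c j * ntkTerm (x i) (x j) (n + 1)) :=
    fun i j => (ntkTerm_summable (hx i) (hx j)).mul_left _
  have inner : ∀ i : Fin N, ∑ j, ∑' n : ℕ, (c i * c j * ntkTerm (x i) (x j) (n + 1))
      = ∑' n : ℕ, ∑ j, (c i * c j * ntkTerm (x i) (x j) (n + 1)) :=
    fun i => (Summable.tsum_finsetSum (fun j _ => hsum i j)).symm
  simp_rw [inner]
  rw [← Summable.tsum_finsetSum (fun i _ => summable_sum (fun j _ => hsum i j))]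
  exact tsum_nonneg fun n => term_psd x hx c (n + 1)
end
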